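/- arXiv:2603.16005 — 4 statements merged into one kernel-verified Lean document; each statement's English description precedes it below -/
import Mathlib

section
/- Assume the cost c(x,y) = h(x−y) satisfies (H1)–(H3). Let u_1,…,u_n ∈ ℝ^d be distinct and x_1,…,x_n ∈ ℝ^d be distinct, with empirical measures Q_n and P_n. Then for every j ∈ {1,…,n}, the finite sample breakdown point of T_{Q_n→P_n}(u_j) lies in the interval [TD^−(u_j;Q_n) + 1/n, TD(u_j;Q_n)]. If moreover u_1,…,u_n are in general position and n ≥ d, then the finite sample breakdown point of T_{Q_n→P_n}(u_j) equals TD^−(u_j;Q_n) + 1/n. -/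
open Filter MeasureTheory Bornology Topology Set
open scoped RealInnerProductSpace ENNReal BigOperators Classical

noncomputable section

abbrev Euc (d : ℕ) := EuclideanSpace ℝ (Fin d)

/-- The cost function `c(x,y) = h(x-y)`. -/
def cost {d : ℕ} (h : Euc d → ℝ) (x y : Euc d) : ℝ := h (x - y)

/-- The truncated cone `Cone(r, θ, z, p)`. -/
def TruncCone {d : ℕ} (r θ : ℝ) (z p : Euc d) : Set (Euc d) :=
  {x | ‖x - p‖ * ‖z‖ * Real.cos (θ / 2) ≤ ⟪z, x - p⟫ ∧ ⟪z, x - p⟫ ≤ r * ‖z‖}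

/-- (H1): `h` is strictly convex. -/
def H1 {d : ℕ} (h : Euc d → ℝ) : Prop := StrictConvexOn ℝ Set.univ h

/-- (H2): for every height `r > 0` and angle `θ ∈ (0, π)` there is `M > 0` such that for every
`p` with `‖p‖ > M` there is a truncated cone with vertex `p` on which `h` attains its maximum
at `p`. -/
def H2 {d : ℕ} (h : Euc d → ℝ) : Prop :=
  ∀ r : ℝ, 0 < r → ∀ θ : ℝ, θ ∈ Set.Ioo 0 Real.pi → ∃ M : ℝ, 0 < M ∧
    ∀ p : Euc d, M < ‖p‖ → ∃ z : Euc d, z ≠ 0 ∧ ∀ x ∈ TruncCone r θ z p, h x ≤ h p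

/-- (H3): `h(x)/‖x‖ → ∞` as `‖x‖ → ∞`. -/
def H3 {d : ℕ} (h : Euc d → ℝ) : Prop :=
  ∀ C : ℝ, ∃ R : ℝ, ∀ x : Euc d, R ≤ ‖x‖ → C * ‖x‖ ≤ h x

/-- A function `f : ℝ^d → ℝ ∪ {-∞}` is `c`-concave if it is an infimum of functions
`x ↦ c(x,y) - t` over a nonempty family `𝒯` of pairs `(y,t)`. -/
def IsCConcave {d : ℕ} (h : Euc d → ℝ) (f : Euc d → EReal) : Prop :=
  ∃ T : Set (Euc d × ℝ), T.Nonempty ∧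
    ∀ x : Euc d, f x = ⨅ p ∈ T, ((cost h x p.1 - p.2 : ℝ) : EReal)

/-- The `c`-superdifferential of `f`, as a subset of `ℝ^d × ℝ^d`. -/
def CSuperdiff {d : ℕ} (h : Euc d → ℝ) (f : Euc d → EReal) : Set (Euc d × Euc d) :=
  {q | ∀ z : Euc d, f z ≤ f q.1 + ((cost h z q.2 - cost h q.1 q.2 : ℝ) : EReal)}

/-- `∂^c f(x)`. -/
def CSuperdiffAt {d : ℕ} (h : Euc d → ℝ) (f : Euc d → EReal) (x : Euc d) : Set (Euc d) :=
  {y | (x, y) ∈ CSuperdiff h f}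

/-- `∂^c f(U) = ⋃_{x ∈ U} ∂^c f(x)`. -/
def CSuperdiffImg {d : ℕ} (h : Euc d → ℝ) (f : Euc d → EReal) (U : Set (Euc d)) :
    Set (Euc d) :=
  ⋃ x ∈ U, CSuperdiffAt h f x

/-- `dom(f) = {x : f(x) > -∞}`. -/
def edom {d : ℕ} (f : Euc d → EReal) : Set (Euc d) := {x | f x ≠ ⊥}

/-- A sequence of sets escapes to the horizon if it eventually avoids every ball
`B_R(0)`. -/
def EscapesToHorizon {α : Type*} [Norm α] (A : ℕ → Set α) : Prop :=
  ∀ R : ℝ, 0 < R → ∃ N : ℕ, ∀ n, N ≤ n → ∀ a ∈ A n, R ≤ ‖a‖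

/-- No subsequence of the sequence of sets escapes to the horizon. -/
def NoSubseqEscapes {α : Type*} [Norm α] (A : ℕ → Set α) : Prop :=
  ∀ φ : ℕ → ℕ, StrictMono φ → ¬ EscapesToHorizon fun k => A (φ k)

/-- A Kantorovich potential for `(Q, P')`: a `c`-concave function `f` whose `c`-superdifferential
is `Q`-a.e. a singleton `{T x}` and whose (a.e. defined) selection `T` pushes `Q` forward
to `P'`. -/
def IsKantorovichPotential {d : ℕ} (h : Euc d → ℝ) (Q P' : Measure (Euc d))
    (f : Euc d → EReal) : Prop :=
  IsCConcave h f ∧ ∃ T : Euc d → Euc d,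
    (∀ᵐ x ∂Q, CSuperdiffAt h f x = {T x}) ∧ Measure.map T Q = P'

/-- The Tukey depth `TD(u;Q) = inf_{v ∈ S^{d-1}} Q {x : ⟨v, x-u⟩ ≤ 0}`. -/
def tukeyDepth {d : ℕ} (Q : Measure (Euc d)) (u : Euc d) : ℝ≥0∞ :=
  ⨅ v ∈ {v : Euc d | ‖v‖ = 1}, Q {x | ⟪v, x - u⟫ ≤ 0}

/-- The set `S_ε(u)` of possible values at `u` of `c`-superdifferentials of Kantorovich
potentials from `Q` to an `ε`-contamination of `P`. -/
def contamSet {d : ℕ} (h : Euc d → ℝ) (Q P : Measure (Euc d)) (ε : ℝ) (u : Euc d) :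
    Set (Euc d) :=
  {y | ∃ μ : Measure (Euc d), IsProbabilityMeasure μ ∧ ∃ f : Euc d → EReal,
    IsKantorovichPotential h Q (ENNReal.ofReal (1 - ε) • P + ENNReal.ofReal ε • μ) f ∧
    y ∈ CSuperdiffAt h f u}

/-- Breakdown point `BP(u) = inf {ε ∈ (0,1) : S_ε(u) is unbounded}`. -/
def breakdownPoint {d : ℕ} (h : Euc d → ℝ) (Q P : Measure (Euc d)) (u : Euc d) : ℝ≥0∞ :=
  ⨅ ε ∈ {ε : ℝ | 0 < ε ∧ ε < 1 ∧ ¬ IsBounded (contamSet h Q P ε u)}, ENNReal.ofReal ε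

/-- `σ` is an optimal assignment for source points `u` and target points `x`. -/
def IsOptAssign {d n : ℕ} (h : Euc d → ℝ) (u x : Fin n → Euc d)
    (σ : Equiv.Perm (Fin n)) : Prop :=
  ∀ τ : Equiv.Perm (Fin n), ∑ i, cost h (u i) (x (σ i)) ≤ ∑ i, cost h (u i) (x (τ i))

/-- The dataset `x'` shares at least `k` atoms (with multiplicity) with the dataset `x`
of distinct points. -/
def SharesAtoms {d n : ℕ} (x x' : Fin n → Euc d) (k : ℕ) : Prop :=
  ∃ s : Finset (Fin n), k ≤ s.card ∧ ∃ g : Fin n → Fin n,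
    Set.InjOn g ↑s ∧ ∀ i ∈ s, x' (g i) = x i

/-- The set of values `x'_{σ(j)}` over datasets `x'` sharing at least `n - ℓ` atoms with `x`
and optimal assignments `σ` for `(u, x')`. -/
def fsBadSet {d n : ℕ} (h : Euc d → ℝ) (u x : Fin n → Euc d) (j : Fin n) (ℓ : ℕ) :
    Set (Euc d) :=
  {y | ∃ (x' : Fin n → Euc d) (σ : Equiv.Perm (Fin n)),
    SharesAtoms x x' (n - ℓ) ∧ IsOptAssign h u x' σ ∧ y = x' (σ j)}

/-- Finite sample (replacement) breakdown point of `T_{Q_n → P_n}(u_j)`. -/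
def finiteSampleBP {d n : ℕ} (h : Euc d → ℝ) (u x : Fin n → Euc d) (j : Fin n) : ℝ :=
  ((sInf {ℓ : ℕ | 1 ≤ ℓ ∧ ℓ ≤ n ∧ ¬ IsBounded (fsBadSet h u x j ℓ)} : ℕ) : ℝ) / n

/-- Tukey depth of `a` with respect to the empirical measure of `u_1, …, u_n`. -/
def empTD {d n : ℕ} (u : Fin n → Euc d) (a : Euc d) : ℝ :=
  ⨅ v : {v : Euc d // ‖v‖ = 1},
    ((Finset.univ.filter fun i => ⟪(v : Euc d), u i - a⟫ ≤ 0).card : ℝ) / n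

/-- Lower Tukey depth of `a` with respect to the empirical measure of `u_1, …, u_n`. -/
def empTDlt {d n : ℕ} (u : Fin n → Euc d) (a : Euc d) : ℝ :=
  ⨅ v : {v : Euc d // ‖v‖ = 1},
    ((Finset.univ.filter fun i => ⟪(v : Euc d), u i - a⟫ < 0).card : ℝ) / n

/-- Points in general position: every subset of cardinality at most `d+1` is affinely
independent. -/
def InGeneralPosition {d n : ℕ} (u : Fin n → Euc d) : Prop :=
  ∀ s : Finset (Fin n), s.card ≤ d + 1 → AffineIndependent ℝ fun i : s => u (i : Fin n)

/-- Convex conjugate `h*(y) = sup_x (⟨x,y⟩ - h(x))`. -/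
def convConj {d : ℕ} (h : Euc d → ℝ) (y : Euc d) : ℝ := ⨆ x : Euc d, (⟪x, y⟫ - h x)

/-- Topological support of a measure. -/
def measSupport {d : ℕ} (Q : Measure (Euc d)) : Set (Euc d) :=
  {x | ∀ U : Set (Euc d), IsOpen U → x ∈ U → 0 < Q U}

/-- A set `Γ ⊂ ℝ^d × ℝ^d` is `c`-cyclically monotone. -/
def CCyclMono {d : ℕ} (h : Euc d → ℝ) (Γ : Set (Euc d × Euc d)) : Prop :=
  ∀ (N : ℕ) (p : Fin N → Euc d × Euc d), (∀ i, p i ∈ Γ) →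
    ∀ τ : Equiv.Perm (Fin N),
      ∑ i, cost h (p i).1 (p i).2 ≤ ∑ i, cost h (p i).1 (p (τ i)).2

/-! The upper bounds come from an explicit contamination. Given a direction `v`, replace the
targets `x_i` for `i` in `S = {i | ⟪v, u_i - u_j⟫ ≤ 0}` (in general position: `j` together with
`{i | ⟪v, u_i - u_j⟫ < 0}`) by a single far point `u_j - q`, where `q` minimises `h - t ⟪v, ·⟫`.
Every `u_i` with `i ∉ S` lies strictly on the positive side of `v`, so for large `t` sending the
far point to such a `u_i` costs more than any swap can save; hence the optimal assignment sends
`u_j` to the far point, and by superlinearity of `h` the minimiser `q` escapes to infinity.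

For the lower bound, if `u_j` is sent to arbitrarily far points `y` after replacing `ℓ` targets,
optimality against each of the `n - ℓ` retained targets bounds the drop
`h p - h (p + (u_i - u_j))` at `p = u_j - y`. Far from the origin, the cones of (H2) with
opening close to `π`, convexity of `h` along the segment to `0` and superlinear growth show that
bounded drops force the corresponding `u_i - u_j` into a closed half-space `{⟪v, ·⟫ ≥ 0}`; counting
then gives `#{i | ⟪v, u_i - u_j⟫ < 0} < ℓ`.

In general position at most `d` of the `u_i` lie on a hyperplane, so the points on the boundary
of an optimal half-space for the lower Tukey depth are affinely independent together with `u_j`,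
and a small tilt of the direction pushes them all to the positive side without changing the
count. -/

section InnerProductSpace

variable {E : Type*} [NormedAddCommGroup E] [InnerProductSpace ℝ E]

lemma LinearIndependent.exists_forall_inner_pos [FiniteDimensional ℝ E] {ι : Type*} {f : ι → E}
    (hf : LinearIndependent ℝ f) : ∃ w : E, ∀ i, 0 < ⟪w, f i⟫ := by
  let b := Module.Basis.extend hf.linearIndepOn_id
  let φ : E →L[ℝ] ℝ := LinearMap.toContinuousLinearMap b.sumCoords
  refine ⟨(InnerProductSpace.toDual ℝ E).symm φ, fun i => ?_⟩
  have hfi : f i = b ⟨f i, hf.linearIndepOn_id.subset_extend _ (mem_range_self i)⟩ := by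
    simp [b]
  rw [InnerProductSpace.toDual_symm_apply, LinearMap.coe_toContinuousLinearMap', hfi,
    Module.Basis.sumCoords_self_apply]
  exact one_pos

lemma AffineIndependent.exists_forall_inner_sub_pos [FiniteDimensional ℝ E] {ι : Type*}
    {p : ι → E} (hp : AffineIndependent ℝ p) (i₀ : ι) :
    ∃ w : E, ∀ i, i ≠ i₀ → 0 < ⟪w, p i - p i₀⟫ := by
  obtain ⟨w, hw⟩ :=
    ((affineIndependent_iff_linearIndependent_vsub ℝ p i₀).1 hp).exists_forall_inner_pos
  exact ⟨w, fun i hi => hw ⟨i, hi⟩⟩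

lemma exists_pos_forall_inner_add_smul_sign {ι : Type*} [Finite ι] {v : E} (hv : v ≠ 0)
    (w : E) (δ : ι → E) : ∃ ε : ℝ, 0 < ε ∧ v + ε • w ≠ 0 ∧ ∀ i,
      (⟪v, δ i⟫ < 0 → ⟪v + ε • w, δ i⟫ < 0) ∧ (0 < ⟪v, δ i⟫ → 0 < ⟪v + ε • w, δ i⟫) := by
  have hcont : Continuous fun ε : ℝ => v + ε • w := by fun_prop
  have hlim : Tendsto (fun ε : ℝ => v + ε • w) (𝓝 0) (𝓝 v) := by
    simpa using hcont.tendsto 0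
  have hnear : ∀ᶠ ε in 𝓝 (0 : ℝ), v + ε • w ≠ 0 ∧ ∀ i,
      (⟪v, δ i⟫ < 0 → ⟪v + ε • w, δ i⟫ < 0) ∧ (0 < ⟪v, δ i⟫ → 0 < ⟪v + ε • w, δ i⟫) := by
    refine (hlim.eventually_ne hv).and (eventually_all.2 fun i => ?_)
    have hi : Tendsto (fun ε : ℝ => ⟪v + ε • w, δ i⟫) (𝓝 0) (𝓝 ⟪v, δ i⟫) :=
      hlim.inner tendsto_const_nhds
    simp only [eventually_and, eventually_imp_distrib_left]
    exact ⟨fun hneg => hi.eventually (eventually_lt_nhds hneg),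
      fun hpos => hi.eventually (eventually_gt_nhds hpos)⟩
  obtain ⟨ε, hε, hεpos⟩ :=
    ((hnear.filter_mono (nhdsWithin_le_nhds (s := Ioi 0))).and self_mem_nhdsWithin).exists
  exact ⟨ε, hεpos, hε⟩

lemma exists_pos_forall_exists_mul_norm_le_inner [FiniteDimensional ℝ E] {ι : Type*}
    (δ : ι → E) (P : Finset ι) (hP : ∀ v : E, v ≠ 0 → ∃ i ∈ P, 0 < ⟪v, δ i⟫) :
    ∃ c : ℝ, 0 < c ∧ ∀ v : E, v ≠ 0 → ∃ i ∈ P, c * ‖v‖ ≤ ⟪v, δ i⟫ := by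
  rcases P.eq_empty_or_nonempty with rfl | hP₀
  · exact ⟨1, one_pos, fun v hv => by simpa using hP v hv⟩
  rcases (Metric.sphere (0 : E) 1).eq_empty_or_nonempty with hS | hS
  · refine ⟨1, one_pos, fun v hv => ?_⟩
    have : ‖v‖⁻¹ • v ∈ Metric.sphere (0 : E) 1 := by simp [norm_smul, hv]
    simp [hS] at this
  let g : E → ℝ := fun v => P.sup' hP₀ fun i => ⟪v, δ i⟫
  have hg : Continuous g := Continuous.finset_sup'_apply hP₀ fun i _ => by fun_prop
  obtain ⟨v₀, hv₀, hmin⟩ := (isCompact_sphere (0 : E) 1).exists_isMinOn hS hg.continuousOn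
  obtain ⟨i₀, hi₀, hpos⟩ := hP v₀ (ne_zero_of_mem_unit_sphere ⟨v₀, hv₀⟩)
  refine ⟨g v₀, hpos.trans_le (Finset.le_sup' (fun i => ⟪v₀, δ i⟫) hi₀), fun v hv => ?_⟩
  have hvpos : 0 < ‖v‖ := norm_pos_iff.2 hv
  obtain ⟨i, hi, hgi⟩ := Finset.exists_mem_eq_sup' hP₀ fun i => ⟪‖v‖⁻¹ • v, δ i⟫
  refine ⟨i, hi, ?_⟩
  have hle : g v₀ ≤ ‖v‖⁻¹ * ⟪v, δ i⟫ := by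
    rw [← real_inner_smul_left, ← hgi]
    exact hmin (by simp [norm_smul, hv])
  rwa [le_inv_mul_iff₀ hvpos, mul_comm] at hle

lemma exists_pos_forall_finset_exists_mul_norm_le_inner [FiniteDimensional ℝ E] {ι : Type*}
    [Fintype ι] (δ : ι → E) : ∃ c : ℝ, 0 < c ∧ ∀ P : Finset ι,
      (∀ v : E, v ≠ 0 → ∃ i ∈ P, 0 < ⟪v, δ i⟫) → ∀ v : E, v ≠ 0 → ∃ i ∈ P, c * ‖v‖ ≤ ⟪v, δ i⟫ := by
  have hfin : ∀ P : Finset ι, ∃ c : ℝ, 0 < c ∧ ((∀ v : E, v ≠ 0 → ∃ i ∈ P, 0 < ⟪v, δ i⟫) →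
      ∀ v : E, v ≠ 0 → ∃ i ∈ P, c * ‖v‖ ≤ ⟪v, δ i⟫) := by
    intro P
    by_cases hP : ∀ v : E, v ≠ 0 → ∃ i ∈ P, 0 < ⟪v, δ i⟫
    · obtain ⟨c, hc, hcP⟩ := exists_pos_forall_exists_mul_norm_le_inner δ P hP
      exact ⟨c, hc, fun _ => hcP⟩
    · exact ⟨1, one_pos, fun h => absurd h hP⟩
  choose c hc hcP using hfin
  refine ⟨Finset.univ.inf' Finset.univ_nonempty c,
    (Finset.lt_inf'_iff _).2 fun P _ => hc P, fun P hP v hv => ?_⟩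
  obtain ⟨i, hi, hle⟩ := hcP P hP v hv
  exact ⟨i, hi, le_trans (mul_le_mul_of_nonneg_right
    (Finset.inf'_le _ (Finset.mem_univ P)) (norm_nonneg v)) hle⟩

lemma ConvexOn.half_mul_sub_le_sub {h : E → ℝ} (hconv : ConvexOn ℝ univ h) {μ : ℝ}
    (hμ0 : 0 ≤ μ) (hμ1 : μ ≤ 1) {y p : E} (hle : h ((1 + μ) • y) ≤ h p) (h0p : h 0 ≤ h p) :
    μ / 2 * (h p - h 0) ≤ h p - h y := by
  have hμ : 0 < 1 + μ := by linarith
  have hcomb : (1 + μ)⁻¹ • ((1 + μ) • y) + (μ / (1 + μ)) • (0 : E) = y := by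
    rw [smul_smul, inv_mul_cancel₀ hμ.ne', one_smul, smul_zero, add_zero]
  have hconv' := hconv.2 (mem_univ ((1 + μ) • y)) (mem_univ 0) (inv_nonneg.2 hμ.le)
    (div_nonneg hμ0 hμ.le) (by field_simp)
  rw [hcomb, smul_eq_mul, smul_eq_mul] at hconv'
  rw [show μ / (1 + μ) = 1 - (1 + μ)⁻¹ by field_simp; ring] at hconv'
  have hhalf : 1 / 2 ≤ (1 + μ)⁻¹ := by
    rw [one_div]; exact inv_anti₀ hμ (by linarith)
  calc μ / 2 * (h p - h 0) = μ * (h p - h 0) * (1 / 2) := by ring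
    _ ≤ μ * (h p - h 0) * (1 + μ)⁻¹ :=
        mul_le_mul_of_nonneg_left hhalf (mul_nonneg hμ0 (sub_nonneg.2 h0p))
    _ = (1 - (1 + μ)⁻¹) * (h p - h 0) := by field_simp; ring
    _ ≤ h p - h y := by nlinarith [mul_le_mul_of_nonneg_left hle (inv_nonneg.2 hμ.le)]

end InnerProductSpace

section Cone

variable {d : ℕ}

lemma exists_mem_Ioo_cos_half_le {ε : ℝ} (hε : 0 < ε) :
    ∃ θ ∈ Ioo 0 Real.pi, 0 ≤ Real.cos (θ / 2) ∧ Real.cos (θ / 2) ≤ ε := by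
  set a := min ε (1 / 2)
  have ha : 0 < a := lt_min hε one_half_pos
  have ha1 : a < 1 := (min_le_right _ _).trans_lt one_half_lt_one
  refine ⟨2 * Real.arccos a, ⟨?_, ?_⟩, ?_⟩
  · linarith [Real.arccos_pos.2 ha1]
  · linarith [Real.arccos_lt_pi_div_two.2 ha]
  · rw [mul_div_cancel_left₀ _ two_ne_zero, Real.cos_arccos (by linarith) ha1.le]
    exact ⟨ha.le, min_le_left _ _⟩

lemma smul_add_mem_truncCone {r θ c : ℝ} {z p δ : Euc d} (hz : z ≠ 0) (hc : 0 < c)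
    (hcδ : c * ‖z‖ ≤ ⟪z, δ⟫) (hp : 4 * ‖δ‖ ≤ ‖p‖) (hr : 2 * ‖δ‖ ≤ r)
    (hcos₀ : 0 ≤ Real.cos (θ / 2)) (hcos : r * Real.cos (θ / 2) ≤ c / 4) :
    (1 + c / (2 * ‖p‖)) • (p + δ) ∈ TruncCone r θ z p := by
  have hz₀ : 0 < ‖z‖ := norm_pos_iff.2 hz
  have hcδ' : c ≤ ‖δ‖ :=
    le_of_mul_le_mul_right (by linarith [real_inner_le_norm z δ]) hz₀
  have hp₀ : 0 < ‖p‖ := by linarith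
  set e := (c / (2 * ‖p‖)) • (p + δ)
  have hQ : (1 + c / (2 * ‖p‖)) • (p + δ) - p = δ + e := by
    simp only [e, add_smul, one_smul]; abel
  have he : ‖e‖ ≤ 5 * c / 8 := by
    have hpδ : ‖p + δ‖ ≤ 5 / 4 * ‖p‖ := by linarith [norm_add_le p δ]
    calc ‖e‖ = c / (2 * ‖p‖) * ‖p + δ‖ := by
            rw [norm_smul, Real.norm_of_nonneg (by positivity)]
      _ ≤ c / (2 * ‖p‖) * (5 / 4 * ‖p‖) := by gcongr
      _ = 5 * c / 8 := by field_simp; ring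
  have hnorm : ‖δ + e‖ ≤ r := by linarith [norm_add_le δ e]
  have hinner : 3 * c / 8 * ‖z‖ ≤ ⟪z, δ + e⟫ := by
    have hze : -(‖z‖ * ‖e‖) ≤ ⟪z, e⟫ := neg_le_of_abs_le (abs_real_inner_le_norm z e)
    rw [inner_add_right]
    nlinarith [mul_le_mul_of_nonneg_left he hz₀.le]
  simp only [TruncCone, mem_ofPred_eq, hQ]
  constructor
  · calc ‖δ + e‖ * ‖z‖ * Real.cos (θ / 2) ≤ r * ‖z‖ * Real.cos (θ / 2) := by gcongr
      _ = ‖z‖ * (r * Real.cos (θ / 2)) := by ring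
      _ ≤ ‖z‖ * (c / 4) := by gcongr
      _ ≤ ⟪z, δ + e⟫ := by nlinarith
  · calc ⟪z, δ + e⟫ ≤ ‖z‖ * ‖δ + e‖ := real_inner_le_norm _ _
      _ ≤ r * ‖z‖ := by nlinarith

end Cone

section Drop

variable {d : ℕ} {h : Euc d → ℝ}

lemma exists_radius_inner_nonneg_of_drop_le (hconv : ConvexOn ℝ univ h) (h2 : H2 h) (h3 : H3 h)
    {ι : Type*} [Fintype ι] (δ : ι → Euc d) (C : ℝ) :
    ∃ R : ℝ, ∀ (p : Euc d) (P : Finset ι), R ≤ ‖p‖ → (∀ i ∈ P, h p - h (p + δ i) ≤ C) →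
      ∃ v : Euc d, v ≠ 0 ∧ ∀ i ∈ P, 0 ≤ ⟪v, δ i⟫ := by
  obtain ⟨c, hc, hcP⟩ := exists_pos_forall_finset_exists_mul_norm_le_inner δ
  obtain ⟨D, hD⟩ := Finite.bddAbove_range fun i => ‖δ i‖
  set r := 2 * max D 0 + 1
  have hr : 0 < r := by positivity
  have hδr : ∀ i, 2 * ‖δ i‖ ≤ r := fun i => by
    linarith [le_max_left D 0, hD (mem_range_self i)]
  obtain ⟨θ, hθ, hcos₀, hcos⟩ := exists_mem_Ioo_cos_half_le (ε := c / (4 * r)) (by positivity)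
  obtain ⟨M, -, hM⟩ := h2 r hr θ hθ
  set K := 4 * (|C| + 1) / c
  obtain ⟨R₃, hR₃⟩ := h3 (K + |h 0|)
  refine ⟨max (max (M + 1) R₃) (max (2 * r) (max 1 c)), fun p P hp hdrop => ?_⟩
  simp only [max_le_iff] at hp
  obtain ⟨⟨hpM, hpR₃⟩, hpr, hp1, hpc⟩ := hp
  -- Otherwise some `p + δ i`, pushed outwards by the factor `1 + c / (2 * ‖p‖)`, lies in the
  -- cone of (H2) at `p`; convexity on the segment to `0` then makes its drop exceed `C`.
  by_contra! hneg
  obtain ⟨z, hz, hcone⟩ := hM p (by linarith)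
  obtain ⟨i, hi, hci⟩ := hcP P (fun v hv => by
    obtain ⟨i, hi, hlt⟩ := hneg (-v) (neg_ne_zero.2 hv)
    exact ⟨i, hi, by rw [inner_neg_left] at hlt; linarith⟩) z hz
  rw [le_div_iff₀ (by positivity)] at hcos
  have hmem := smul_add_mem_truncCone (p := p) hz hc hci (by linarith [hδr i]) (hδr i) hcos₀
    (by linarith)
  have hgrowth : K * ‖p‖ ≤ h p - h 0 := by
    have := hR₃ p hpR₃
    nlinarith [le_abs_self (h 0), abs_nonneg (h 0)]
  have hK : 0 ≤ K := by positivity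
  have hp₀ : 0 < ‖p‖ := by linarith
  have hμ : c / (2 * ‖p‖) ≤ 1 := by rw [div_le_one (by positivity)]; linarith
  have hlow := hconv.half_mul_sub_le_sub (by positivity) hμ (hcone _ hmem)
    (by nlinarith [mul_nonneg hK hp₀.le])
  have hfinal : |C| + 1 ≤ c / (2 * ‖p‖) / 2 * (h p - h 0) :=
    calc |C| + 1 = c / (2 * ‖p‖) / 2 * (K * ‖p‖) := by simp only [K]; field_simp; ring
      _ ≤ c / (2 * ‖p‖) / 2 * (h p - h 0) := by gcongr
  linarith [hdrop i hi, le_abs_self C]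

end Drop

lemma Finset.sum_apply_swap_sub_sum {α M : Type*} [Fintype α] [DecidableEq α] [AddCommGroup M]
    (f : α → α → M) {a b : α} (hab : a ≠ b) :
    ∑ m, f m (Equiv.swap a b m) - ∑ m, f m m = f a b + f b a - f a a - f b b := by
  rw [← Finset.sum_sub_distrib, ← Finset.sum_subset (Finset.subset_univ {a, b}),
    Finset.sum_pair hab]
  · simp only [Equiv.swap_apply_left, Equiv.swap_apply_right]; abel
  · intro m _ hm
    simp only [Finset.mem_insert, Finset.mem_singleton, not_or] at hm
    rw [Equiv.swap_apply_of_ne_of_ne hm.1 hm.2, sub_self]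

lemma Equiv.Perm.exists_notMem_apply_mem {α : Type*} [Fintype α] [DecidableEq α]
    (σ : Equiv.Perm α) {S : Finset α} {j : α} (hj : j ∈ S) (hσj : σ j ∉ S) :
    ∃ i ∉ S, σ i ∈ S := by
  by_contra! hcon
  have hsub : Sᶜ.map σ.toEmbedding ⊆ Sᶜ := by
    intro y hy
    obtain ⟨i, hi, rfl⟩ := Finset.mem_map.1 hy
    exact Finset.mem_compl.2 (hcon i (Finset.mem_compl.1 hi))
  have hσj' : σ j ∈ Sᶜ.map σ.toEmbedding := by
    rw [Finset.eq_of_subset_of_card_le hsub (Finset.card_map _).ge]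
    exact Finset.mem_compl.2 hσj
  simp [hj] at hσj'

section Assignment

variable {d n : ℕ} {h : Euc d → ℝ}

lemma exists_isOptAssign (h : Euc d → ℝ) (u x : Fin n → Euc d) :
    ∃ σ : Equiv.Perm (Fin n), IsOptAssign h u x σ := by
  obtain ⟨σ, -, hσ⟩ := Finset.exists_min_image Finset.univ
    (fun σ : Equiv.Perm (Fin n) => ∑ i, cost h (u i) (x (σ i))) ⟨1, Finset.mem_univ _⟩
  exact ⟨σ, fun τ => hσ τ (Finset.mem_univ _)⟩

lemma IsOptAssign.add_le_swap {u x : Fin n → Euc d} {σ : Equiv.Perm (Fin n)}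
    (hσ : IsOptAssign h u x σ) {a b : Fin n} (hab : a ≠ b) :
    cost h (u a) (x (σ a)) + cost h (u b) (x (σ b)) ≤
      cost h (u a) (x (σ b)) + cost h (u b) (x (σ a)) := by
  have hτ := hσ ((Equiv.swap a b).trans σ)
  have hsplit := Finset.sum_apply_swap_sub_sum (fun m k => cost h (u m) (x (σ k))) hab
  simp only [Equiv.trans_apply] at hτ
  linarith

lemma sharesAtoms_of_forall_notMem {x x' : Fin n → Euc d} (S : Finset (Fin n))
    (hS : ∀ i ∉ S, x' i = x i) : SharesAtoms x x' (n - S.card) :=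
  ⟨Sᶜ, by rw [Finset.card_compl, Fintype.card_fin], id, injOn_id _,
    fun i hi => hS i (Finset.mem_compl.1 hi)⟩

lemma H3.tendsto_sub_inner (h3 : H3 h) (w : Euc d) :
    Tendsto (fun y => h y - ⟪w, y⟫) (cocompact _) atTop := by
  obtain ⟨R, hR⟩ := h3 (‖w‖ + 1)
  refine tendsto_atTop_mono' _ ?_ tendsto_norm_cocompact_atTop
  filter_upwards [tendsto_norm_cocompact_atTop.eventually_ge_atTop R] with y hy
  nlinarith [hR y hy, real_inner_le_norm w y]

lemma eventually_exists_norm_gt_forall_sub_inner_le (hc : Continuous h) (h3 : H3 h)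
    {v : Euc d} (hv : ‖v‖ = 1) (K : ℝ) :
    ∀ᶠ t in atTop, ∃ q : Euc d, K < ‖q‖ ∧ ∀ y, h q - t * ⟪v, q⟫ ≤ h y - t * ⟪v, y⟫ := by
  obtain ⟨m, hm⟩ := (isCompact_closedBall (0 : Euc d) K).bddBelow_image hc.continuousOn
  filter_upwards [eventually_ge_atTop 0, eventually_gt_atTop (h ((K + 1) • v) - m)]
    with t ht₀ ht
  obtain ⟨q, hq⟩ := (show Continuous fun y => h y - ⟪t • v, y⟫ by fun_prop).exists_forall_le
    (h3.tendsto_sub_inner (t • v))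
  simp only [real_inner_smul_left] at hq
  refine ⟨q, lt_of_not_ge fun hqK => ?_, hq⟩
  have hmq : m ≤ h q := hm (mem_image_of_mem h (mem_closedBall_zero_iff.2 hqK))
  have hvq : ⟪v, q⟫ ≤ K := (real_inner_le_norm v q).trans (by rw [hv, one_mul]; exact hqK)
  have hcmp := hq ((K + 1) • v)
  rw [real_inner_smul_right, real_inner_self_eq_norm_sq, hv] at hcmp
  nlinarith [mul_le_mul_of_nonneg_left hvq ht₀]

lemma not_isBounded_fsBadSet_card (hc : Continuous h) (h3 : H3 h) (u x : Fin n → Euc d)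
    (j : Fin n) {w : Euc d} (hw : w ≠ 0) {S : Finset (Fin n)} (hjS : j ∈ S)
    (hS : ∀ i ∉ S, 0 < ⟪w, u i - u j⟫) : ¬ IsBounded (fsBadSet h u x j S.card) := by
  set v := ‖w‖⁻¹ • w
  have hv : ‖v‖ = 1 := by simp [v, norm_smul, hw]
  have hvS : ∀ i ∉ S, 0 < ⟪v, u i - u j⟫ := fun i hi => by
    rw [real_inner_smul_left]; exact mul_pos (by positivity) (hS i hi)
  rw [isBounded_iff_forall_norm_le]
  rintro ⟨K, hK⟩
  obtain ⟨C, hC⟩ := Finite.bddAbove_range fun k : Fin n × Fin n × Fin n =>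
    h (u k.1 - x k.2.2) - h (u k.2.1 - x k.2.2)
  have hgap : ∀ᶠ t in atTop, ∀ i, i ∉ S → C < t * ⟪v, u i - u j⟫ :=
    eventually_all.2 fun i => by
      by_cases hi : i ∈ S
      · exact Eventually.of_forall fun _ hi' => absurd hi hi'
      · filter_upwards [(tendsto_id.atTop_mul_const (hvS i hi)).eventually_gt_atTop C]
          with t ht _ using ht
  obtain ⟨t, ht, q, hq, hmin⟩ :=
    (hgap.and (eventually_exists_norm_gt_forall_sub_inner_le hc h3 hv (K + ‖u j‖))).exists
  set x' : Fin n → Euc d := fun i => if i ∈ S then u j - q else x i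
  obtain ⟨σ, hσ⟩ := exists_isOptAssign h u x'
  -- Otherwise some `i ∉ S` receives the far point, and swapping with `j` would be cheaper.
  have hσj : σ j ∈ S := by
    by_contra hσj
    obtain ⟨i, hiS, hσi⟩ := σ.exists_notMem_apply_mem hjS hσj
    have hswap := hσ.add_le_swap (show i ≠ j by rintro rfl; exact hiS hjS)
    simp only [cost, x', if_pos hσi, if_neg hσj, sub_sub_cancel] at hswap
    have hq' := hmin (q + (u i - u j))
    rw [inner_add_right] at hq'
    rw [show u i - (u j - q) = q + (u i - u j) by abel] at hswap
    linarith [ht i hiS, hC ⟨(i, j, σ j), rfl⟩]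
  have hmem : u j - q ∈ fsBadSet h u x j S.card :=
    ⟨x', σ, sharesAtoms_of_forall_notMem S fun i hi => if_neg hi, hσ, by simp [x', hσj]⟩
  have hnorm : ‖q‖ - ‖u j‖ ≤ ‖u j - q‖ := by
    rw [norm_sub_rev]; exact norm_sub_norm_le q (u j)
  linarith [hK _ hmem]

end Assignment

def negSide {d n : ℕ} (u : Fin n → Euc d) (a v : Euc d) : Finset (Fin n) :=
  Finset.univ.filter fun i => ⟪v, u i - a⟫ < 0

def nonposSide {d n : ℕ} (u : Fin n → Euc d) (a v : Euc d) : Finset (Fin n) :=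
  Finset.univ.filter fun i => ⟪v, u i - a⟫ ≤ 0

section LowerBound

variable {d n : ℕ} {h : Euc d → ℝ}

lemma exists_far_drop_le_of_not_isBounded {u x : Fin n → Euc d} {j : Fin n} {ℓ : ℕ}
    (hub : ¬ IsBounded (fsBadSet h u x j ℓ)) :
    ∃ C : ℝ, ∀ R : ℝ, ∃ (p : Euc d) (P : Finset (Fin n)), R ≤ ‖p‖ ∧ n - ℓ ≤ P.card ∧
      j ∉ P ∧ ∀ i ∈ P, h p - h (p + (u i - u j)) ≤ C := by
  obtain ⟨C, hC⟩ := Finite.bddAbove_range fun k : Fin n × Fin n × Fin n =>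
    h (u k.1 - x k.2.2) - h (u k.2.1 - x k.2.2)
  obtain ⟨B, hB⟩ := Finite.bddAbove_range fun i => ‖x i‖
  have hB₀ : 0 ≤ B := (norm_nonneg _).trans (hB (mem_range_self j))
  refine ⟨C, fun R => ?_⟩
  rw [isBounded_iff_forall_norm_le] at hub
  push Not at hub
  obtain ⟨y, ⟨x', σ, ⟨s, hs, g, hg, hgx⟩, hσ, rfl⟩, hy⟩ := hub (max R 0 + ‖u j‖ + B)
  have hne : ∀ i ∈ s, σ.symm (g i) ≠ j := by
    intro i hi hij
    have hxi : x' (σ j) = x i := by rw [← hij, Equiv.apply_symm_apply, hgx i hi]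
    rw [hxi] at hy
    linarith [hB (mem_range_self i), le_max_right R 0, norm_nonneg (u j)]
  refine ⟨u j - x' (σ j), s.image fun i => σ.symm (g i), ?_, ?_, ?_, ?_⟩
  · have := norm_sub_norm_le (x' (σ j)) (u j)
    rw [norm_sub_rev] at this
    linarith [le_max_left R 0]
  · rw [Finset.card_image_of_injOn fun a ha b hb hab => hg ha hb (σ.symm.injective hab)]
    omega
  · simpa using hne
  · simp only [Finset.mem_image]
    rintro _ ⟨i, hi, rfl⟩
    have hswap := hσ.add_le_swap (hne i hi).symm
    simp only [cost, Equiv.apply_symm_apply, hgx i hi] at hswap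
    rw [show u j - x' (σ j) + (u (σ.symm (g i)) - u j) = u (σ.symm (g i)) - x' (σ j) by abel]
    linarith [hC ⟨(j, σ.symm (g i), i), rfl⟩]

lemma exists_card_negSide_lt (hconv : ConvexOn ℝ univ h) (h2 : H2 h) (h3 : H3 h)
    {u x : Fin n → Euc d} {j : Fin n} {ℓ : ℕ} (hub : ¬ IsBounded (fsBadSet h u x j ℓ)) :
    ∃ v : Euc d, v ≠ 0 ∧ (negSide u (u j) v).card < ℓ := by
  obtain ⟨C, hfar⟩ := exists_far_drop_le_of_not_isBounded hub
  obtain ⟨R, hR⟩ := exists_radius_inner_nonneg_of_drop_le hconv h2 h3 (fun i => u i - u j) C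
  obtain ⟨p, P, hp, hP, hjP, hdrop⟩ := hfar R
  obtain ⟨v, hv, hvP⟩ := hR p P hp hdrop
  refine ⟨v, hv, ?_⟩
  have hdisj : Disjoint (negSide u (u j) v) P := Finset.disjoint_left.2 fun i hi hiP => by
    simp only [negSide, Finset.mem_filter] at hi
    linarith [hvP i hiP]
  have hsub : negSide u (u j) v ∪ P ⊆ Finset.univ.erase j := by
    intro i hi
    refine Finset.mem_erase.2 ⟨?_, Finset.mem_univ i⟩
    rintro rfl
    rcases Finset.mem_union.1 hi with hi | hi
    · simp [negSide] at hi
    · exact hjP hi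
  have hcard := Finset.card_le_card hsub
  rw [Finset.card_union_of_disjoint hdisj, Finset.card_erase_of_mem (Finset.mem_univ j),
    Finset.card_univ, Fintype.card_fin] at hcard
  have := j.pos
  omega

end LowerBound

section TukeyDepth

variable {d n : ℕ}

lemma negSide_smul (u : Fin n → Euc d) (a : Euc d) {c : ℝ} (hc : 0 < c) (v : Euc d) :
    negSide u a (c • v) = negSide u a v :=
  Finset.filter_congr fun i _ => by simp [real_inner_smul_left, mul_neg_iff, hc, hc.not_gt]

lemma ciInf_natCast_div_eq {α : Type*} [Nonempty α] {F : α → ℕ} {a : α}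
    (ha : ∀ b, F a ≤ F b) (n : ℕ) : ⨅ b, (F b : ℝ) / n = F a / n :=
  le_antisymm (ciInf_le ⟨0, by rintro _ ⟨b, rfl⟩; positivity⟩ a)
    (le_ciInf fun b => by gcongr; exact ha b)

lemma exists_empTD_eq (hd : 1 ≤ d) (u : Fin n → Euc d) (a : Euc d) :
    ∃ v : Euc d, ‖v‖ = 1 ∧ empTD u a = (nonposSide u a v).card / n := by
  have : Nonempty {v : Euc d // ‖v‖ = 1} :=
    ⟨⟨EuclideanSpace.single ⟨0, hd⟩ 1, by simp⟩⟩
  let F := fun v : {v : Euc d // ‖v‖ = 1} => (nonposSide u a v).card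
  exact ⟨_, (Function.argmin F).2, ciInf_natCast_div_eq (fun b => Function.argmin_le F b) n⟩

lemma empTDlt_eq_iInf (u : Fin n → Euc d) (a : Euc d) :
    empTDlt u a = ⨅ v : {v : Euc d // ‖v‖ = 1}, ((negSide u a v).card : ℝ) / n :=
  rfl

lemma empTDlt_le (u : Fin n → Euc d) (a : Euc d) {v : Euc d} (hv : v ≠ 0) :
    empTDlt u a ≤ (negSide u a v).card / n := by
  rw [empTDlt_eq_iInf, ← negSide_smul u a (inv_pos.2 (norm_pos_iff.2 hv))]
  exact ciInf_le (f := fun w : {v : Euc d // ‖v‖ = 1} => ((negSide u a w).card : ℝ) / n)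
    ⟨0, by rintro _ ⟨w, rfl⟩; positivity⟩ ⟨‖v‖⁻¹ • v, by simp [norm_smul, hv]⟩

lemma empTDlt_eq_of_forall_le (u : Fin n → Euc d) (a : Euc d) {v : Euc d} (hv : v ≠ 0)
    (hmin : ∀ w : Euc d, w ≠ 0 → (negSide u a v).card ≤ (negSide u a w).card) :
    empTDlt u a = (negSide u a v).card / n := by
  have : Nonempty {v : Euc d // ‖v‖ = 1} := ⟨⟨‖v‖⁻¹ • v, by simp [norm_smul, hv]⟩⟩
  refine le_antisymm (empTDlt_le u a hv) ?_
  rw [empTDlt_eq_iInf]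
  refine le_ciInf fun w => div_le_div_of_nonneg_right ?_ (Nat.cast_nonneg n)
  exact_mod_cast hmin w (ne_zero_of_norm_ne_zero (by rw [w.2]; exact one_ne_zero))

end TukeyDepth

section GeneralPosition

variable {d n : ℕ} {u : Fin n → Euc d}

lemma InGeneralPosition.card_filter_inner_eq_le (gp : InGeneralPosition u) {v : Euc d}
    (hv : v ≠ 0) (c : ℝ) : (Finset.univ.filter fun i => ⟪v, u i⟫ = c).card ≤ d := by
  by_contra! hlt
  obtain ⟨s, hs, hcard⟩ := Finset.exists_subset_card_eq (Nat.succ_le_of_lt hlt)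
  have hfr := (gp s hcard.le).finrank_vectorSpan (n := d) (by simp [hcard])
  obtain ⟨i₀, hi₀⟩ : s.Nonempty := Finset.card_pos.1 (by omega)
  have hle : vectorSpan ℝ (range fun i : s => u i) ≤ (ℝ ∙ v)ᗮ := by
    rw [vectorSpan_eq_span_vsub_set_right ℝ (mem_range_self ⟨i₀, hi₀⟩), Submodule.span_le]
    rintro _ ⟨_, ⟨i, rfl⟩, rfl⟩
    have hi := (Finset.mem_filter.1 (hs i.2)).2
    have hi₀' := (Finset.mem_filter.1 (hs hi₀)).2
    rw [SetLike.mem_coe, Submodule.mem_orthogonal_singleton_iff_inner_right]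
    simp only [vsub_eq_sub, inner_sub_right, hi, hi₀', sub_self]
  have hdim := Submodule.finrank_add_finrank_orthogonal (ℝ ∙ v)
  rw [finrank_span_singleton hv, finrank_euclideanSpace_fin] at hdim
  have := Submodule.finrank_mono hle
  omega

lemma InGeneralPosition.exists_forall_card_negSide_le (hd : 1 ≤ d) (gp : InGeneralPosition u)
    (j : Fin n) : ∃ v : Euc d, v ≠ 0 ∧
      (∀ w : Euc d, w ≠ 0 → (negSide u (u j) v).card ≤ (negSide u (u j) w).card) ∧
      ∀ i, i ≠ j → ⟪v, u i - u j⟫ ≠ 0 := by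
  have : Nonempty {v : Euc d // v ≠ 0} := ⟨⟨EuclideanSpace.single ⟨0, hd⟩ 1, by simp⟩⟩
  let F := fun w : {v : Euc d // v ≠ 0} => (negSide u (u j) w).card
  obtain ⟨v₀, hv₀, hmin⟩ : ∃ v₀ : Euc d, v₀ ≠ 0 ∧
      ∀ w : Euc d, w ≠ 0 → (negSide u (u j) v₀).card ≤ (negSide u (u j) w).card :=
    ⟨_, (Function.argmin F).2, fun w hw => Function.argmin_le F ⟨w, hw⟩⟩
  set s := Finset.univ.filter fun i => ⟪v₀, u i⟫ = ⟪v₀, u j⟫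
  have hjs : j ∈ s := Finset.mem_filter.2 ⟨Finset.mem_univ j, rfl⟩
  obtain ⟨w, hw⟩ := (gp s (by linarith [gp.card_filter_inner_eq_le hv₀ ⟪v₀, u j⟫])
    ).exists_forall_inner_sub_pos ⟨j, hjs⟩
  obtain ⟨ε, hε, hv, hsign⟩ := exists_pos_forall_inner_add_smul_sign hv₀ w fun i => u i - u j
  have hzero : ∀ i, i ≠ j → ⟪v₀, u i - u j⟫ = 0 → 0 < ⟪v₀ + ε • w, u i - u j⟫ := by
    intro i hij h0
    have his : i ∈ s := by
      rw [inner_sub_right, sub_eq_zero] at h0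
      exact Finset.mem_filter.2 ⟨Finset.mem_univ i, h0⟩
    rw [inner_add_left, h0, zero_add, real_inner_smul_left]
    exact mul_pos hε (hw ⟨i, his⟩ (by simpa using hij))
  refine ⟨v₀ + ε • w, hv, fun w' hw' => le_trans (Finset.card_le_card ?_) (hmin w' hw'),
    fun i hij => ?_⟩
  · intro i hi
    simp only [negSide, Finset.mem_filter, Finset.mem_univ, true_and] at hi ⊢
    rcases lt_trichotomy ⟪v₀, u i - u j⟫ 0 with hlt | heq | hgt
    · exact hlt
    · rcases eq_or_ne i j with rfl | hij
      · simp at hi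
      · exact absurd (hzero i hij heq) hi.not_gt
    · exact absurd ((hsign i).2 hgt) hi.not_gt
  · rcases lt_trichotomy ⟪v₀, u i - u j⟫ 0 with hlt | heq | hgt
    · exact ((hsign i).1 hlt).ne
    · exact (hzero i hij heq).ne'
    · exact ((hsign i).2 hgt).ne'

end GeneralPosition

section BreakdownBounds

variable {d n : ℕ} {h : Euc d → ℝ}

lemma finiteSampleBP_le_card_div (hc : Continuous h) (h3 : H3 h) (u x : Fin n → Euc d)
    (j : Fin n) {v : Euc d} (hv : v ≠ 0) {S : Finset (Fin n)} (hjS : j ∈ S)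
    (hS : ∀ i ∉ S, 0 < ⟪v, u i - u j⟫) : finiteSampleBP h u x j ≤ S.card / n := by
  have hmem : S.card ∈ {ℓ : ℕ | 1 ≤ ℓ ∧ ℓ ≤ n ∧ ¬ IsBounded (fsBadSet h u x j ℓ)} :=
    ⟨Finset.card_pos.2 ⟨j, hjS⟩, (Finset.card_le_univ S).trans_eq (Fintype.card_fin n),
      not_isBounded_fsBadSet_card hc h3 u x j hv hjS hS⟩
  unfold finiteSampleBP
  gcongr
  exact Nat.sInf_le hmem

lemma empTDlt_add_le_finiteSampleBP (hd : 1 ≤ d) (hconv : ConvexOn ℝ univ h)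
    (hc : Continuous h) (h2 : H2 h) (h3 : H3 h) (u x : Fin n → Euc d) (j : Fin n) :
    empTDlt u (u j) + 1 / n ≤ finiteSampleBP h u x j := by
  have hL : {ℓ : ℕ | 1 ≤ ℓ ∧ ℓ ≤ n ∧ ¬ IsBounded (fsBadSet h u x j ℓ)}.Nonempty := by
    refine ⟨n, j.pos, le_rfl, ?_⟩
    have he : (EuclideanSpace.single ⟨0, hd⟩ 1 : Euc d) ≠ 0 := by simp
    simpa using not_isBounded_fsBadSet_card hc h3 u x j he (Finset.mem_univ j) (by simp)
  obtain ⟨v, hv, hlt⟩ := exists_card_negSide_lt hconv h2 h3 (Nat.sInf_mem hL).2.2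
  calc empTDlt u (u j) + 1 / n ≤ (negSide u (u j) v).card / n + 1 / n := by
        gcongr; exact empTDlt_le u (u j) hv
    _ = (((negSide u (u j) v).card + 1 : ℕ) : ℝ) / n := by push_cast; ring
    _ ≤ finiteSampleBP h u x j := by
        unfold finiteSampleBP
        gcongr
        exact hlt

end BreakdownBounds

theorem finiteSampleBP_mem_Icc_general (d n : ℕ) (hd : 1 ≤ d) (h : Euc d → ℝ)
    (h1 : H1 h) (h2 : H2 h) (h3 : H3 h)
    (u x : Fin n → Euc d)
    (j : Fin n) :
    (empTDlt u (u j) + 1 / n ≤ finiteSampleBP h u x j ∧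
      finiteSampleBP h u x j ≤ empTD u (u j)) ∧
    (InGeneralPosition u → d ≤ n →
      finiteSampleBP h u x j = empTDlt u (u j) + 1 / n) := by
  have hconv : ConvexOn ℝ univ h := h1.convexOn
  have hc : Continuous h := continuousOn_univ.1 (hconv.continuousOn isOpen_univ)
  have hlow := empTDlt_add_le_finiteSampleBP hd hconv hc h2 h3 u x j
  refine ⟨⟨hlow, ?_⟩, fun hgp _ => le_antisymm ?_ hlow⟩
  · obtain ⟨v, hv, hTD⟩ := exists_empTD_eq hd u (u j)
    rw [hTD]
    have hv₀ : v ≠ 0 := norm_ne_zero_iff.1 (by rw [hv]; exact one_ne_zero)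
    exact finiteSampleBP_le_card_div hc h3 u x j hv₀ (S := nonposSide u (u j) v)
      (by simp [nonposSide]) fun i hi => by simpa [nonposSide] using hi
  · obtain ⟨v, hv, hmin, hties⟩ := hgp.exists_forall_card_negSide_le hd j
    have hj : j ∉ negSide u (u j) v := by simp [negSide]
    rw [empTDlt_eq_of_forall_le u (u j) hv hmin]
    calc finiteSampleBP h u x j ≤ (insert j (negSide u (u j) v)).card / n :=
          finiteSampleBP_le_card_div hc h3 u x j hv (Finset.mem_insert_self j _) fun i hi => by
            simp only [Finset.mem_insert, negSide, Finset.mem_filter, Finset.mem_univ, true_and,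
              not_or, not_lt] at hi
            exact hi.2.lt_of_ne' (hties i hi.1)
      _ = (negSide u (u j) v).card / n + 1 / n := by
          rw [Finset.card_insert_of_notMem hj]; push_cast; ring

/-- the finite sample breakdown point of `T_{Q_n→P_n}(u_j)` lies in
`[TD^-(u_j;Q_n) + 1/n, TD(u_j;Q_n)]`; under general position with `n ≥ d` it equals
`TD^-(u_j;Q_n) + 1/n`. -/
theorem finiteSampleBP_mem_Icc (d n : ℕ) (hd : 1 ≤ d) (h : Euc d → ℝ)
    (hpos : ∀ x, 0 ≤ h x) (h1 : H1 h) (h2 : H2 h) (h3 : H3 h)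
    (u x : Fin n → Euc d) (hu : Function.Injective u) (hx : Function.Injective x)
    (j : Fin n) :
    (empTDlt u (u j) + 1 / n ≤ finiteSampleBP h u x j ∧
      finiteSampleBP h u x j ≤ empTD u (u j)) ∧
    (InGeneralPosition u → d ≤ n →
      finiteSampleBP h u x j = empTDlt u (u j) + 1 / n) :=
  finiteSampleBP_mem_Icc_general d n hd h h1 h2 h3 u x j
end
end

section
/- Assume the cost c(x,y) = h(x−y) satisfies (H1)–(H3). Let f_n be a sequence of c-concave functions on ℝ^d such that no subsequence of the sequence of sets {∂^c f_n} ⊂ ℝ^d × ℝ^d escapes to the horizon, and let (u_n, p_n) ∈ ∂^c f_n with {u_n} bounded, the closure of {u_n} contained in the interior of ⋂_n dom(f_n), and ‖p_n‖ → ∞. Then for every limit point u of the sequence {u_n}, there exist a unit vector v ∈ S^{d−1} and a strictly increasing sequence of indices (n_k) such that for every compact set K ⊂ {z ∈ ℝ^d : ⟨v, z − u⟩ < 0}, the sequence of sets {∂^c f_{n_k}(K)} escapes to the horizon. -/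
/-!
Pass to a subsequence with `u_n → a` and put `q_n = u_n - p_n`, so that `‖q_n‖ → ∞`. By (H2) and
(H3), along a further subsequence `h` is maximal at `q_n` on truncated cones whose height and
opening grow to infinity and whose unit axes `w_n` converge to some `w₀`, and `h (q_n) ≥ t_n ‖q_n‖`
with `t_n → ∞`. If `⟪w₀, x - a⟫ > 0` on a compact set `K`, then for `x ∈ K` the vector `x - u_n`
eventually points uniformly into these cones, and convexity gives
`h (x - p_n) ≤ h (q_n) - ε (t_n - h 0)`. For `(x, y) ∈ ∂^c f_n`, two-point `c`-monotonicity with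
`(u_n, p_n)` then forces `h (u_n - y) ≥ ε (t_n - h 0)`, so `y` escapes to infinity; take `v = -w₀`.
-/

open Filter MeasureTheory Bornology Topology Set
open scoped RealInnerProductSpace ENNReal BigOperators Classical

noncomputable section

section InnerProductSpace

variable {E : Type*} [NormedAddCommGroup E] [InnerProductSpace ℝ E]

/-- `h` is maximal at `q` on the truncated cone of (H2) with vertex `q`, unit axis `w`, height `t`
and `cos (θ / 2) = 1 / t`. -/
def IsConeMax (h : E → ℝ) (t : ℝ) (w q : E) : Prop :=
  ∀ c : E, ‖c‖ ≤ t * ⟪w, c⟫ → ⟪w, c⟫ ≤ t → h (q + c) ≤ h q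

lemma IsConeMax.apply_add_le {h : E → ℝ} {t ε : ℝ} {w q c : E} (hmax : IsConeMax h t w q)
    (hw : ‖w‖ = 1) (hε0 : 0 < ε) (hε1 : ε ≤ 1) (hε : ε ≤ ⟪w, c⟫) (hc : ‖c‖ ≤ ε * t) :
    h (q + c) ≤ h q := by
  have hwc : ⟪w, c⟫ ≤ ‖c‖ := by simpa [hw] using real_inner_le_norm w c
  have ht : 0 ≤ t := nonneg_of_mul_nonneg_right (by linarith) hε0
  exact hmax c (hc.trans (by rw [mul_comm]; gcongr)) (by nlinarith)

lemma ConvexOn.apply_sub_normalize_add_le {h : E → ℝ} (hcx : ConvexOn ℝ univ h) (h0 : 0 ≤ h 0)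
    {q : E} {t : ℝ} (hq : 1 ≤ ‖q‖) (hslope : t * ‖q‖ ≤ h q) :
    h (q - ‖q‖⁻¹ • q) + (t - h 0) ≤ h q := by
  have hμ0 : 0 ≤ ‖q‖⁻¹ := by positivity
  have hμ1 : ‖q‖⁻¹ ≤ 1 := inv_le_one_of_one_le₀ hq
  have hseg := hcx.2 (mem_univ q) (mem_univ 0) (sub_nonneg.2 hμ1) hμ0 (sub_add_cancel 1 _)
  rw [smul_zero, add_zero, sub_smul, one_smul, smul_eq_mul, smul_eq_mul] at hseg
  have hμt : t ≤ ‖q‖⁻¹ * h q := by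
    rw [← div_eq_inv_mul, le_div_iff₀ (by linarith)]; exact hslope
  nlinarith

/-- Writing `q + s = ε (q - q/‖q‖) + (1 - ε) (q + c)`, the point `q + c` lies in the cone, where `h`
is at most `h q`, while `q - q/‖q‖` loses at least `t - h 0` by convexity. -/
lemma IsConeMax.apply_add_add_le {h : E → ℝ} (hcx : ConvexOn ℝ univ h) (h0 : 0 ≤ h 0)
    {t ε : ℝ} {w q s : E} (hmax : IsConeMax h t w q) (hw : ‖w‖ = 1) (hq : 1 ≤ ‖q‖)
    (hslope : t * ‖q‖ ≤ h q) (hε : 0 < ε) (hε1 : ε ≤ 1 / 2) (hs : 2 * ε ≤ ⟪w, s⟫)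
    (hst : 2 * (‖s‖ + 1) ≤ ε * t) : h (q + s) + ε * (t - h 0) ≤ h q := by
  set u := ‖q‖⁻¹ • q
  have hu : ‖u‖ = 1 := norm_smul_inv_norm (norm_pos_iff.1 (by linarith))
  have hε' : 0 < 1 - ε := by linarith
  set c := (1 - ε)⁻¹ • (s + ε • u)
  have hc : (1 - ε) • c = s + ε • u := smul_inv_smul₀ hε'.ne' _
  have hsplit : q + s = ε • (q - u) + (1 - ε) • (q + c) := by
    rw [smul_add (1 - ε), hc]; module
  have hinv : (1 - ε)⁻¹ ≤ 2 := by rw [inv_le_comm₀ hε' two_pos]; linarith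
  have hwu : -1 ≤ ⟪w, u⟫ := by
    have := abs_real_inner_le_norm w u
    rw [hw, hu, one_mul] at this
    exact (abs_le.1 this).1
  have hwc : ε ≤ ⟪w, c⟫ := by
    rw [inner_smul_right, inner_add_right, inner_smul_right]
    have : ε ≤ ⟪w, s⟫ + ε * ⟪w, u⟫ := by nlinarith
    exact this.trans (le_mul_of_one_le_left (by linarith) (one_le_inv₀ hε' |>.2 (by linarith)))
  have hcn : ‖c‖ ≤ ε * t := by
    calc ‖c‖ ≤ (1 - ε)⁻¹ * (‖s‖ + ε) := by
          rw [norm_smul, Real.norm_of_nonneg (inv_nonneg.2 hε'.le)]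
          gcongr
          exact (norm_add_le _ _).trans (by rw [norm_smul, hu, Real.norm_of_nonneg hε.le, mul_one])
      _ ≤ 2 * (‖s‖ + 1) := by gcongr; linarith
      _ ≤ ε * t := hst
  have hcone := hmax.apply_add_le hw hε (by linarith) hwc hcn
  have hdrop := hcx.apply_sub_normalize_add_le h0 hq hslope
  have hconv := hcx.2 (mem_univ (q - u)) (mem_univ (q + c)) hε.le hε'.le (add_sub_cancel ε 1)
  rw [← hsplit, smul_eq_mul, smul_eq_mul] at hconv
  nlinarith

lemma IsCompact.exists_pos_eventually_le_inner {ι : Type*} {l : Filter ι} {K : Set E}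
    (hK : IsCompact K) {w u : ι → E} {w₀ a : E} (hw : Tendsto w l (𝓝 w₀)) (hu : Tendsto u l (𝓝 a))
    (hKa : ∀ x ∈ K, 0 < ⟪w₀, x - a⟫) : ∃ δ > 0, ∀ᶠ i in l, ∀ x ∈ K, δ ≤ ⟪w i, x - u i⟫ := by
  obtain ⟨δ, hδ, hδK⟩ := hK.exists_forall_le' (by fun_prop) hKa
  refine ⟨δ / 2, half_pos hδ, ?_⟩
  have hnear : ∀ᶠ p : E × E in 𝓝 (w₀, a), ∀ x ∈ K, δ / 2 < ⟪p.1, x - p.2⟫ := by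
    refine hK.eventually_forall_of_forall_eventually fun x hx => ?_
    have hcont : Continuous fun z : (E × E) × E => ⟪z.1.1, z.2 - z.1.2⟫ := by fun_prop
    exact hcont.continuousAt.eventually_const_lt (by linarith [hδK x hx])
  filter_upwards [(hw.prodMk_nhds hu).eventually hnear] with i hi x hx
  exact (hi x hx).le

end InnerProductSpace

lemma tendsto_norm_sub_atTop_of_isBounded {E ι : Type*} [SeminormedAddCommGroup E]
    {l : Filter ι} {u p : ι → E} (hu : IsBounded (range u))
    (hp : Tendsto (fun i => ‖p i‖) l atTop) : Tendsto (fun i => ‖u i - p i‖) l atTop := by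
  obtain ⟨B, hB⟩ := hu.exists_norm_le
  refine tendsto_atTop_mono (fun i => ?_) (tendsto_atTop_add_const_right _ (-B) hp)
  linarith [norm_sub_norm_le (p i) (u i), norm_sub_rev (p i) (u i), hB _ (mem_range_self i)]

lemma escapesToHorizon_of_le_apply_sub {E : Type*} [NormedAddCommGroup E] [ProperSpace E]
    {h : E → ℝ} (hcont : Continuous h) {A : ℕ → Set E} {u : ℕ → E} {g : ℕ → ℝ}
    (hu : IsBounded (range u)) (hg : Tendsto g atTop atTop)
    (hA : ∀ᶠ n in atTop, ∀ y ∈ A n, g n ≤ h (u n - y)) : EscapesToHorizon A := by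
  intro R hR
  obtain ⟨B, hB⟩ := hu.exists_norm_le
  obtain ⟨C, hC⟩ := (isCompact_closedBall (0 : E) (B + R)).bddAbove_image hcont.continuousOn
  obtain ⟨N, hN⟩ := eventually_atTop.1 (hA.and (hg.eventually_gt_atTop C))
  refine ⟨N, fun n hn y hy => le_of_not_gt fun hyR => ?_⟩
  have hball : u n - y ∈ Metric.closedBall (0 : E) (B + R) := by
    rw [mem_closedBall_zero_iff]
    exact (norm_sub_le _ _).trans (add_le_add (hB _ (mem_range_self n)) hyR.le)
  have := hC (mem_image_of_mem h hball)
  linarith [(hN n hn).1 y hy, (hN n hn).2]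

section Euclidean

variable {d : ℕ} {h : Euc d → ℝ}

lemma IsCConcave.ne_top {f : Euc d → EReal} (hf : IsCConcave h f) (x : Euc d) : f x ≠ ⊤ := by
  obtain ⟨T, ⟨p, hp⟩, hfT⟩ := hf
  rw [hfT x]
  exact ne_top_of_le_ne_top (EReal.coe_ne_top _) (iInf₂_le p hp)

lemma cost_add_cost_le_of_mem_cSuperdiff {f : Euc d → EReal} {u p x y : Euc d}
    (hbot : f u ≠ ⊥) (htop : f u ≠ ⊤) (hup : (u, p) ∈ CSuperdiff h f)
    (hxy : (x, y) ∈ CSuperdiff h f) : cost h u p + cost h x y ≤ cost h x p + cost h u y := by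
  have hx := hup x
  have hu := hxy u
  lift f u to ℝ using ⟨htop, hbot⟩ with r
  generalize f x = v at hx hu
  induction v using EReal.rec with
  | bot => simp at hu
  | top =>
    rw [← EReal.coe_add] at hx
    exact absurd hx (EReal.coe_lt_top _).not_ge
  | coe s =>
    norm_cast at hx hu
    linarith

lemma H2.exists_isConeMax (h2 : H2 h) {t : ℝ} (ht : 1 < t) :
    ∃ M, ∀ q : Euc d, M < ‖q‖ → ∃ w, ‖w‖ = 1 ∧ IsConeMax h t w q := by
  have ht0 : 0 < t := one_pos.trans ht
  have hθ : 2 * Real.arccos t⁻¹ ∈ Ioo 0 Real.pi := by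
    constructor
    · exact mul_pos two_pos (Real.arccos_pos.2 (inv_lt_one_of_one_lt₀ ht))
    · linarith [Real.arccos_lt_pi_div_two.2 (inv_pos.2 ht0)]
  obtain ⟨M, -, hM⟩ := h2 t ht0 _ hθ
  refine ⟨M, fun q hq => ?_⟩
  obtain ⟨z, hz, hzmax⟩ := hM q hq
  have hz0 : 0 < ‖z‖ := norm_pos_iff.2 hz
  have hcos : Real.cos (2 * Real.arccos t⁻¹ / 2) = t⁻¹ := by
    rw [mul_div_cancel_left₀ _ two_ne_zero, Real.cos_arccos (by linarith [inv_pos.2 ht0])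
      (inv_le_one_of_one_le₀ ht.le)]
  refine ⟨‖z‖⁻¹ • z, norm_smul_inv_norm hz, fun c hc hct => ?_⟩
  have hzc : ⟪z, c⟫ = ‖z‖ * ⟪‖z‖⁻¹ • z, c⟫ := by
    rw [real_inner_smul_left, mul_inv_cancel_left₀ hz0.ne']
  refine hzmax _ ⟨?_, ?_⟩ <;> rw [add_sub_cancel_left, hzc]
  · rw [hcos, mul_right_comm, mul_comm]
    gcongr
    rw [← div_eq_mul_inv, div_le_iff₀ ht0]
    linarith
  · nlinarith

lemma exists_subseq_isConeMax (h2 : H2 h) (h3 : H3 h) {q : ℕ → Euc d}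
    (hq : Tendsto (fun n => ‖q n‖) atTop atTop) :
    ∃ φ : ℕ → ℕ, StrictMono φ ∧ ∃ t : ℕ → ℝ, Tendsto t atTop atTop ∧
      ∃ w : ℕ → Euc d, ∃ w₀ : Euc d, ‖w₀‖ = 1 ∧ Tendsto w atTop (𝓝 w₀) ∧ ∀ k, ‖w k‖ = 1 ∧
        1 ≤ ‖q (φ k)‖ ∧ t k * ‖q (φ k)‖ ≤ h (q (φ k)) ∧ IsConeMax h (t k) (w k) (q (φ k)) := by
  choose M hM using fun k : ℕ =>
    h2.exists_isConeMax (t := k + 2) (by linarith [k.cast_nonneg (α := ℝ)])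
  choose R hR using (h3 : ∀ C : ℝ, ∃ R, ∀ x : Euc d, R ≤ ‖x‖ → C * ‖x‖ ≤ h x)
  obtain ⟨ξ, hξ, hξq⟩ := extraction_forall_of_frequently
    fun k => (hq.eventually_gt_atTop (max (M k) (max (R (k + 2)) 1))).frequently
  choose w hw hwmax using fun k => hM k _ ((le_max_left _ _).trans_lt (hξq k))
  obtain ⟨w₀, hw₀, κ, hκ, hwκ⟩ := (isCompact_sphere (0 : Euc d) 1).tendsto_subseq
    fun k => mem_sphere_zero_iff_norm.2 (hw k)
  refine ⟨ξ ∘ κ, hξ.comp hκ, fun l => κ l + 2, ?_, w ∘ κ, w₀, mem_sphere_zero_iff_norm.1 hw₀,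
    hwκ, fun l => ⟨hw _, ?_, hR _ _ ?_, hwmax _⟩⟩
  · exact tendsto_atTop_add_const_right _ _ (tendsto_natCast_atTop_atTop.comp hκ.tendsto_atTop)
  · exact ((le_max_right _ _).trans (le_max_right _ _)).trans (hξq _).le
  · exact ((le_max_left _ _).trans (le_max_right _ _)).trans (hξq _).le

lemma le_apply_sub_of_mem_cSuperdiff (hcx : ConvexOn ℝ univ h) (hpos : ∀ x, 0 ≤ h x)
    {f : Euc d → EReal} {u p x y w : Euc d} {t ε : ℝ} (hbot : f u ≠ ⊥) (htop : f u ≠ ⊤)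
    (hup : (u, p) ∈ CSuperdiff h f) (hxy : (x, y) ∈ CSuperdiff h f) (hw : ‖w‖ = 1)
    (hq : 1 ≤ ‖u - p‖) (hslope : t * ‖u - p‖ ≤ h (u - p)) (hmax : IsConeMax h t w (u - p))
    (hε : 0 < ε) (hε1 : ε ≤ 1 / 2) (hs : 2 * ε ≤ ⟪w, x - u⟫)
    (hst : 2 * (‖x - u‖ + 1) ≤ ε * t) : ε * (t - h 0) ≤ h (u - y) := by
  have hgap := hmax.apply_add_add_le hcx (hpos 0) hw hq hslope hε hε1 hs hst
  have hpair := cost_add_cost_le_of_mem_cSuperdiff hbot htop hup hxy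
  rw [sub_add_sub_cancel'] at hgap
  simp only [cost] at hpair
  linarith [hpos (x - y)]

end Euclidean

theorem technical_lemma_part_iii_general (d : ℕ) (h : Euc d → ℝ)
    (hpos : ∀ x, 0 ≤ h x) (h1 : H1 h) (h2 : H2 h) (h3 : H3 h)
    (f : ℕ → Euc d → EReal) (hconc : ∀ n, IsCConcave h (f n))
    (useq pseq : ℕ → Euc d)
    (hmem : ∀ n, (useq n, pseq n) ∈ CSuperdiff h (f n))
    (hbdd : IsBounded (Set.range useq))
    (hcl : closure (Set.range useq) ⊆ interior (⋂ n, edom (f n)))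
    (hp : Tendsto (fun n => ‖pseq n‖) atTop atTop) :
    ∀ a : Euc d, MapClusterPt a atTop useq →
      ∃ v : Euc d, ‖v‖ = 1 ∧ ∃ φ : ℕ → ℕ, StrictMono φ ∧
        ∀ K : Set (Euc d), IsCompact K → K ⊆ {z : Euc d | ⟪v, z - a⟫ < 0} →
          EscapesToHorizon fun k => CSuperdiffImg h (f (φ k)) K := by
  intro a ha
  have hcx : ConvexOn ℝ univ h := h1.convexOn
  have hdom : ∀ n, f n (useq n) ≠ ⊥ := fun n =>
    mem_iInter.1 (interior_subset (hcl (subset_closure (mem_range_self n)))) n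
  obtain ⟨ψ, hψ, hψa⟩ := ha.tendsto_subseq
  obtain ⟨φ, hφ, t, ht, w, w₀, hw₀, hw, hcone⟩ := exists_subseq_isConeMax h2 h3
    (tendsto_norm_sub_atTop_of_isBounded (u := fun n => useq (ψ n))
      (hbdd.subset (range_comp_subset_range ψ useq)) (hp.comp hψ.tendsto_atTop))
  refine ⟨-w₀, by rw [norm_neg, hw₀], ψ ∘ φ, hψ.comp hφ, fun K hK hKa => ?_⟩
  obtain ⟨δ, hδ, hδK⟩ := hK.exists_pos_eventually_le_inner (u := fun k => useq (ψ (φ k))) hw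
    (hψa.comp hφ.tendsto_atTop) fun x hx => by simpa [inner_neg_left] using hKa hx
  set ε := min (δ / 2) (1 / 2)
  have hε : 0 < ε := by positivity
  obtain ⟨S, hS⟩ := (hK.isBounded.sub hbdd).exists_norm_le
  refine escapesToHorizon_of_le_apply_sub (u := fun k => useq (ψ (φ k)))
    (g := fun k => ε * (t k - h 0)) (continuousOn_univ.1 (hcx.continuousOn isOpen_univ))
    (hbdd.subset (range_comp_subset_range (ψ ∘ φ) useq))
    (tendsto_id.const_mul_atTop hε |>.comp (tendsto_atTop_add_const_right _ _ ht)) ?_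
  filter_upwards [hδK, ht.eventually_ge_atTop (2 * (S + 1) / ε)] with k hk hkt
  simp only [CSuperdiffImg, mem_iUnion]
  rintro y ⟨x, hxK, hxy⟩
  obtain ⟨hwk, hq1, hslope, hmax⟩ := hcone k
  have hxu : ‖x - useq (ψ (φ k))‖ ≤ S := hS _ (sub_mem_sub hxK (mem_range_self _))
  refine le_apply_sub_of_mem_cSuperdiff hcx hpos (hdom _) ((hconc _).ne_top _) (hmem _) hxy hwk
    hq1 hslope hmax hε (min_le_right _ _) ?_ ?_
  · linarith [hk x hxK, min_le_left (δ / 2) (1 / 2)]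
  · rw [div_le_iff₀ hε] at hkt
    linarith

/-- technical lemma, part (iii): in the setting of part (i), for every limit
point `a` of `{u_n}` there are a unit vector `v` and a subsequence along which `{∂^c f_n(K)}`
escapes to the horizon for every compact `K ⊂ {z : ⟨v, z - a⟩ < 0}`. -/
theorem technical_lemma_part_iii (d : ℕ) (hd : 1 ≤ d) (h : Euc d → ℝ)
    (hpos : ∀ x, 0 ≤ h x) (h1 : H1 h) (h2 : H2 h) (h3 : H3 h)
    (f : ℕ → Euc d → EReal) (hconc : ∀ n, IsCConcave h (f n))
    (hnoesc : NoSubseqEscapes fun n => CSuperdiff h (f n))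
    (useq pseq : ℕ → Euc d)
    (hmem : ∀ n, (useq n, pseq n) ∈ CSuperdiff h (f n))
    (hbdd : IsBounded (Set.range useq))
    (hcl : closure (Set.range useq) ⊆ interior (⋂ n, edom (f n)))
    (hp : Tendsto (fun n => ‖pseq n‖) atTop atTop) :
    ∀ a : Euc d, MapClusterPt a atTop useq →
      ∃ v : Euc d, ‖v‖ = 1 ∧ ∃ φ : ℕ → ℕ, StrictMono φ ∧
        ∀ K : Set (Euc d), IsCompact K → K ⊆ {z : Euc d | ⟪v, z - a⟫ < 0} →
          EscapesToHorizon fun k => CSuperdiffImg h (f (φ k)) K :=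
  technical_lemma_part_iii_general d h hpos h1 h2 h3 f hconc useq pseq hmem hbdd hcl hp

end
end

section
/- Assume the cost c(x,y) = h(x−y) satisfies (H1)–(H3). Fix ε ∈ (0,1), let Q be a Borel probability measure on ℝ^d absolutely continuous with respect to Lebesgue measure, P a Borel probability measure on ℝ^d, and {ν_n} any sequence of Borel probability measures on ℝ^d. If for each n the function f_n is a Kantorovich potential for (Q, (1−ε)P + εν_n), then no subsequence of the sequence of sets {∂^c f_n} ⊂ ℝ^d × ℝ^d escapes to the horizon. -/
open Filter MeasureTheory Bornology Topology Set
open scoped RealInnerProductSpace ENNReal BigOperators Classical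

noncomputable section

/-!
Since `Q` and `P` are fixed probability measures, there are radii `R₁`, `R₂` such that the
target measure `(1-ε)P + εν_n` gives the ball `B_{R₁}(0)` mass at least `c > 0` uniformly in `n`,
while `Q` gives the complement of `B_{R₂}(0)` mass less than `c`. Hence for every `n` the set of
`x ∈ B_{R₂}(0)` with `∂^c f_n(x) = {T_n x} ⊂ B_{R₁}(0)` has positive `Q`-mass, so every
`∂^c f_n` meets the ball of radius `max R₁ R₂`.
-/

namespace MeasureTheory

variable {α β : Type*} [MeasurableSpace α] [MeasurableSpace β]

theorem Measure.map_apply_le_measure_preimage (μ : Measure α) (f : α → β) {s : Set β}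
    (hs : MeasurableSet s) : μ.map f s ≤ μ (f ⁻¹' s) := by
  by_cases hf : AEMeasurable f μ
  · exact (Measure.map_apply_of_aemeasurable hf hs).le
  · simp [Measure.map_of_not_aemeasurable hf]

variable [PseudoMetricSpace α] [OpensMeasurableSpace α]

theorem tendsto_measure_compl_ball_nat (μ : Measure α) [IsFiniteMeasure μ] (x : α) :
    Tendsto (fun n : ℕ => μ (Metric.ball x n)ᶜ) atTop (𝓝 0) := by
  have hempty : (⋂ n : ℕ, (Metric.ball x n)ᶜ) = ∅ := by
    rw [← compl_iUnion, Metric.iUnion_ball_nat, compl_univ]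
  have := tendsto_measure_iInter_atTop (μ := μ) (s := fun n : ℕ => (Metric.ball x n)ᶜ)
    (fun n => Metric.isOpen_ball.measurableSet.compl.nullMeasurableSet)
    (fun m n hmn => compl_subset_compl.2 (Metric.ball_subset_ball (Nat.cast_le.2 hmn)))
    ⟨0, measure_ne_top μ _⟩
  rwa [hempty, measure_empty] at this

theorem exists_inter_ball_nonempty_of_le_measure (μ : Measure α) [IsFiniteMeasure μ] (x : α)
    {c : ℝ≥0∞} (hc : 0 < c) :
    ∃ R : ℝ, 0 < R ∧ ∀ s : Set α, c ≤ μ s → (s ∩ Metric.ball x R).Nonempty := by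
  obtain ⟨n, hn⟩ := ((tendsto_measure_compl_ball_nat μ x).eventually_lt_const hc).exists
  refine ⟨n + 1, by positivity, fun s hs => not_not.1 fun hempty => ?_⟩
  have hsub : s ⊆ (Metric.ball x n)ᶜ := fun y hy hyn =>
    hempty ⟨y, hy, Metric.ball_subset_ball (by linarith) hyn⟩
  exact (hs.trans (measure_mono hsub)).not_gt hn

end MeasureTheory

theorem no_subseq_escapes_of_kantorovich_general (d : ℕ) (h : Euc d → ℝ)
    (ε : ℝ) (hε : ε ∈ Set.Ioo (0 : ℝ) 1)
    (Q P : Measure (Euc d)) [IsProbabilityMeasure Q] [IsProbabilityMeasure P]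
    (ν : ℕ → Measure (Euc d))
    (f : ℕ → Euc d → EReal)
    (hf : ∀ n, IsKantorovichPotential h Q
      (ENNReal.ofReal (1 - ε) • P + ENNReal.ofReal ε • ν n) (f n)) :
    NoSubseqEscapes fun n => CSuperdiff h (f n) := by
  intro φ _ hesc
  obtain ⟨R₁, hPR₁⟩ := exists_pos_ball (0 : Euc d) (IsProbabilityMeasure.ne_zero P)
  set c := ENNReal.ofReal (1 - ε) * P (Metric.ball 0 R₁)
  have hc : 0 < c := ENNReal.mul_pos (by simpa using hε.2) hPR₁.ne'
  obtain ⟨R₂, hR₂, hQ⟩ := exists_inter_ball_nonempty_of_le_measure Q 0 hc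
  obtain ⟨N, hN⟩ := hesc (max R₁ R₂) (lt_max_of_lt_right hR₂)
  obtain ⟨-, T, hT, hmap⟩ := hf (φ N)
  have hc_le : c ≤ Q (T ⁻¹' Metric.ball 0 R₁ ∩ {x | CSuperdiffAt h (f (φ N)) x = {T x}}) := by
    rw [measure_inter_conull (mem_ae_iff.1 hT)]
    calc c ≤ Q.map T (Metric.ball 0 R₁) := by
          rw [hmap, Measure.add_apply, Measure.smul_apply, smul_eq_mul]
          exact le_self_add
      _ ≤ Q (T ⁻¹' Metric.ball 0 R₁) :=
          Measure.map_apply_le_measure_preimage Q T Metric.isOpen_ball.measurableSet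
  obtain ⟨x, ⟨hTx, hx⟩, hxR₂⟩ := hQ _ hc_le
  have hmem : (x, T x) ∈ CSuperdiff h (f (φ N)) := show T x ∈ CSuperdiffAt h (f (φ N)) x by
    rw [hx]; rfl
  have hfar : max (R₁ : ℝ) R₂ ≤ ‖(x, T x)‖ := hN N le_rfl _ hmem
  rw [Prod.norm_def] at hfar
  have hTx' : ‖T x‖ < R₁ := mem_ball_zero_iff.1 hTx
  have hx' : ‖x‖ < R₂ := mem_ball_zero_iff.1 hxR₂
  exact hfar.not_gt (max_lt (hx'.trans_le (le_max_right _ _)) (hTx'.trans_le (le_max_left _ _)))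

/-- if `f_n` are Kantorovich potentials for `(Q, (1-ε)P + ε ν_n)`, then no
subsequence of `{∂^c f_n}` escapes to the horizon. -/
theorem no_subseq_escapes_of_kantorovich (d : ℕ) (hd : 1 ≤ d) (h : Euc d → ℝ)
    (hpos : ∀ x, 0 ≤ h x) (h1 : H1 h) (h2 : H2 h) (h3 : H3 h)
    (ε : ℝ) (hε : ε ∈ Set.Ioo (0 : ℝ) 1)
    (Q P : Measure (Euc d)) [IsProbabilityMeasure Q] [IsProbabilityMeasure P]
    (hQ : Q ≪ volume)
    (ν : ℕ → Measure (Euc d)) (hν : ∀ n, IsProbabilityMeasure (ν n))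
    (f : ℕ → Euc d → EReal)
    (hf : ∀ n, IsKantorovichPotential h Q
      (ENNReal.ofReal (1 - ε) • P + ENNReal.ofReal ε • ν n) (f n)) :
    NoSubseqEscapes fun n => CSuperdiff h (f n) :=
  no_subseq_escapes_of_kantorovich_general d h ε hε Q P ν f hf
end
end

section
/- Assume the cost c(x,y) = h(x−y) satisfies (H1)–(H3). Consider the setup: distinct points u_1,…,u_n ∈ ℝ^d, distinct points x_1,…,x_n ∈ ℝ^d, an optimal assignment σ_n for (u,x) with T(u_i) = x_{σ_n(i)}; fix j ∈ {1,…,n} and v ∈ S^{d−1}, relabel u_1,…,u_n as u_(1),…,u_(n) so that for some ℓ, u_(ℓ) = u_j and {u_(1),…,u_(ℓ)} consists exactly of the sample points in the halfspace {x : ⟨v, x − u_j⟩ ≤ 0}; fix z_0 ∈ ℝ^d, m ∈ {1,…,n}, and for k ∈ ℕ set z_k = u_j − ∇h*(z_0 + k v); let T_k be an optimal assignment of the n source points u_(1),…,u_(n) to the n target points consisting of z_k with multiplicity m together with T(u_(i)) for i = m+1,…,n (minimizing the total cost ∑_i c(u_(i), ·)). If there exists r ≥ ℓ+1 such that T_k(u_(r))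 = z_k for all sufficiently large k, then ‖T_k(u_j)‖ → ∞ as k → ∞. -/
/-!
Swapping the targets of `u_j` and `u_(r)` in the optimal assignment `T_k` gives
`h(u_(r) - T_k u_j) ≥ h(u_j - T_k u_j) + h(u_(r) - z_k) - h(u_j - z_k)`. Put `p_k = z₀ + k v`.
The point `w_k = ∇h*(p_k) = u_j - z_k` maximizes `x ↦ ⟪x, p_k⟫ - h x`, so the last difference is
at least `⟪u_(r) - u_j, p_k⟫`, which grows linearly in `k` because `u_(r)` lies strictly on the
positive side of the hyperplane `⟪v, · - u_j⟫ = 0`. Hence `h(u_(r) - T_k u_j) → ∞`, and since `h`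
is bounded on bounded sets, `‖T_k u_j‖ → ∞`.

That `∇h*(p)` is the maximizer at `p` comes from the maximizers existing (superlinearity), being
unique (strict convexity) and hence depending continuously on `p` (a compactness argument), which
squeezes `h*(q) - h*(p) - ⟪x_p, q - p⟫` between `0` and `⟪x_q - x_p, q - p⟫`.
-/

open Filter MeasureTheory Bornology Topology Set
open scoped RealInnerProductSpace ENNReal BigOperators Classical

noncomputable section

def IsConjMaximizer {d : ℕ} (h : Euc d → ℝ) (q x : Euc d) : Prop :=
  ∀ x', ⟪x', q⟫ - h x' ≤ ⟪x, q⟫ - h x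

section ConvexConjugate

variable {d : ℕ} {h : Euc d → ℝ}

theorem H1.continuous (h1 : H1 h) : Continuous h :=
  continuousOn_univ.mp (h1.convexOn.continuousOn isOpen_univ)

theorem H3.exists_forall_inner_sub_lt (h3 : H3 h) (ρ : ℝ) :
    ∃ B, 0 ≤ B ∧ ∀ q x : Euc d, ‖q‖ ≤ ρ → B < ‖x‖ → ⟪x, q⟫ - h x < -h 0 := by
  obtain ⟨R, hR⟩ := h3 (ρ + 1)
  refine ⟨max (max R (h 0)) 0, le_max_right _ _, fun q x hq hx => ?_⟩
  have hxR : R ≤ ‖x‖ := ((le_max_left _ _).trans (le_max_left _ _)).trans hx.le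
  have hx0 : h 0 < ‖x‖ := ((le_max_right _ _).trans (le_max_left _ _)).trans_lt hx
  have hinner : ⟪x, q⟫ ≤ ‖x‖ * ρ :=
    (real_inner_le_norm x q).trans (mul_le_mul_of_nonneg_left hq (norm_nonneg x))
  linarith [hR x hxR]

theorem H3.exists_norm_le_of_isConjMaximizer (h3 : H3 h) (ρ : ℝ) :
    ∃ B, ∀ q x : Euc d, ‖q‖ ≤ ρ → IsConjMaximizer h q x → ‖x‖ ≤ B := by
  obtain ⟨B, -, hB⟩ := h3.exists_forall_inner_sub_lt ρ
  refine ⟨B, fun q x hq hx => not_lt.mp fun hBx => ?_⟩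
  have h0 := hx 0
  rw [inner_zero_left] at h0
  linarith [hB q x hq hBx]

theorem exists_isConjMaximizer (hh : Continuous h) (h3 : H3 h) (q : Euc d) :
    ∃ x, IsConjMaximizer h q x := by
  obtain ⟨B, hB0, hB⟩ := h3.exists_forall_inner_sub_lt ‖q‖
  obtain ⟨x, -, hx⟩ := (isCompact_closedBall (0 : Euc d) B).exists_isMaxOn
    (Metric.nonempty_closedBall.mpr hB0) ((continuous_id.inner continuous_const).sub hh).continuousOn
  refine ⟨x, fun x' => ?_⟩
  by_cases hx' : x' ∈ Metric.closedBall 0 B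
  · exact hx hx'
  · have h0 : ⟪(0 : Euc d), q⟫ - h 0 ≤ ⟪x, q⟫ - h x := hx (Metric.mem_closedBall_self hB0)
    rw [inner_zero_left] at h0
    rw [mem_closedBall_zero_iff, not_le] at hx'
    linarith [hB q x' le_rfl hx']

theorem IsConjMaximizer.unique (h1 : H1 h) {q x₁ x₂ : Euc d} (hx₁ : IsConjMaximizer h q x₁)
    (hx₂ : IsConjMaximizer h q x₂) : x₁ = x₂ := by
  have hf : StrictConvexOn ℝ univ fun x => h x - innerSL ℝ q x :=
    h1.sub_concaveOn ((innerSL ℝ q).toLinearMap.concaveOn convex_univ)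
  refine hf.eq_of_isMinOn (fun x _ => ?_) (fun x _ => ?_) trivial trivial
  all_goals
    simp only [innerSL_apply_apply, mem_ofPred_eq, real_inner_comm _ q]
    linarith [hx₁ x, hx₂ x]

theorem IsConjMaximizer.of_tendsto (hh : Continuous h) {α : Type*} {l : Filter α} [l.NeBot]
    {q g : α → Euc d} {p x : Euc d} (hq : Tendsto q l (𝓝 p)) (hg : Tendsto g l (𝓝 x))
    (hmax : ∀ᶠ a in l, IsConjMaximizer h (q a) (g a)) : IsConjMaximizer h p x := fun x' =>
  le_of_tendsto_of_tendsto ((tendsto_const_nhds.inner hq).sub tendsto_const_nhds)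
    ((hg.inner hq).sub ((hh.tendsto x).comp hg)) (hmax.mono fun _ ha => ha x')

theorem continuous_of_isConjMaximizer (h1 : H1 h) (h3 : H3 h) {g : Euc d → Euc d}
    (hg : ∀ q, IsConjMaximizer h q (g q)) : Continuous g := by
  refine continuous_iff_continuousAt.mpr fun p => ?_
  obtain ⟨B, hB⟩ := h3.exists_norm_le_of_isConjMaximizer (‖p‖ + 1)
  have hbdd : ∀ᶠ q in 𝓝 p, g q ∈ Metric.closedBall 0 B := by
    filter_upwards [Metric.ball_mem_nhds p one_pos] with q hq
    exact mem_closedBall_zero_iff.mpr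
      (hB q _ (norm_le_norm_add_const_of_dist_le (Metric.mem_ball.mp hq).le) (hg q))
  refine (isCompact_closedBall 0 B).tendsto_nhds_of_unique_mapClusterPt hbdd fun x _ hx => ?_
  obtain ⟨U, hU, hgU⟩ := mapClusterPt_iff_ultrafilter.mp hx
  exact (IsConjMaximizer.of_tendsto h1.continuous (tendsto_id.mono_left hU) hgU
    (Eventually.of_forall hg)).unique h1 (hg p)

theorem IsConjMaximizer.convConj_eq {q x : Euc d} (hx : IsConjMaximizer h q x) :
    convConj h q = ⟪x, q⟫ - h x :=
  le_antisymm (ciSup_le hx) (le_ciSup ⟨_, forall_mem_range.mpr hx⟩ x)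

theorem IsConjMaximizer.hasGradientAt_convConj (h1 : H1 h) (h3 : H3 h) {p x : Euc d}
    (hx : IsConjMaximizer h p x) : HasGradientAt (convConj h) x p := by
  choose g hg using exists_isConjMaximizer h1.continuous h3
  have hgx : Tendsto g (𝓝 p) (𝓝 x) := by
    simpa only [(hg p).unique h1 hx] using (continuous_of_isConjMaximizer h1 h3 hg).tendsto p
  have hsandwich : ∀ q, |convConj h q - convConj h p - ⟪x, q - p⟫| ≤ ‖g q - x‖ * ‖q - p‖ := by
    intro q
    rw [(hg q).convConj_eq, hx.convConj_eq, abs_of_nonneg]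
    · calc _ = ⟪g q - x, q - p⟫ - ((⟪x, p⟫ - h x) - (⟪g q, p⟫ - h (g q))) := by
            simp only [inner_sub_left, inner_sub_right]; ring
        _ ≤ ⟪g q - x, q - p⟫ := by linarith [hx (g q)]
        _ ≤ _ := real_inner_le_norm _ _
    · simp only [inner_sub_right]
      linarith [hg q x]
  rw [hasGradientAt_iff_isLittleO, Asymptotics.isLittleO_iff]
  intro c hc
  filter_upwards [Metric.tendsto_nhds.mp hgx c hc] with q hq
  rw [Real.norm_eq_abs]
  exact (hsandwich q).trans
    (mul_le_mul_of_nonneg_right (dist_eq_norm (g q) x ▸ hq.le) (norm_nonneg _))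

theorem isConjMaximizer_gradient_convConj (h1 : H1 h) (h3 : H3 h) (p : Euc d) :
    IsConjMaximizer h p (gradient (convConj h) p) := by
  obtain ⟨x, hx⟩ := exists_isConjMaximizer h1.continuous h3 p
  rwa [(hx.hasGradientAt_convConj h1 h3).gradient]

theorem IsConjMaximizer.inner_le_sub {q x : Euc d} (hx : IsConjMaximizer h q x) (δ : Euc d) :
    ⟪δ, q⟫ ≤ h (δ + x) - h x := by
  have := hx (δ + x)
  rw [inner_add_left] at this
  linarith

end ConvexConjugate

theorem IsOptAssign.cost_add_cost_le {d n : ℕ} {h : Euc d → ℝ} {u x : Fin n → Euc d}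
    {σ : Equiv.Perm (Fin n)} (hσ : IsOptAssign h u x σ) {i i' : Fin n} (hii' : i ≠ i') :
    cost h (u i) (x (σ i)) + cost h (u i') (x (σ i')) ≤
      cost h (u i) (x (σ i')) + cost h (u i') (x (σ i)) := by
  have hsum := hσ (σ * Equiv.swap i i')
  rw [← sub_nonneg, ← Finset.sum_sub_distrib, Fintype.sum_eq_add i i' hii'] at hsum
  · simp only [Equiv.Perm.mul_apply, Equiv.swap_apply_left, Equiv.swap_apply_right] at hsum
    linarith
  · intro k hk
    simp only [Equiv.Perm.mul_apply, Equiv.swap_apply_of_ne_of_ne hk.1 hk.2, sub_self]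

theorem tendsto_norm_atTop_of_tendsto_comp {E α : Type*} [NormedAddCommGroup E] [ProperSpace E]
    {φ : E → ℝ} (hφ : Continuous φ) {l : Filter α} {f : α → E} (hf : Tendsto (φ ∘ f) l atTop) :
    Tendsto (fun a => ‖f a‖) l atTop := by
  refine tendsto_norm_cocompact_atTop.comp (hasBasis_cocompact.tendsto_right_iff.mpr fun K hK => ?_)
  obtain ⟨M, hM⟩ := (hK.image hφ).bddAbove
  filter_upwards [hf.eventually_gt_atTop M] with a ha haK
  exact (hM (mem_image_of_mem φ haK)).not_gt ha

theorem discrete_upper_part_i_general (d n : ℕ) (h : Euc d → ℝ)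
    (hpos : ∀ x, 0 ≤ h x) (h1 : H1 h) (h3 : H3 h)
    (u x : Fin n → Euc d)
    (j : Fin n) (v : Euc d)
    -- relabeling `u_(i) = u (ρ i)`
    (ρ : Equiv.Perm (Fin n)) (ℓ : ℕ)
    (hlab : ∀ i : Fin n, ⟪v, u (ρ i) - u j⟫ ≤ 0 ↔ (i : ℕ) < ℓ)
    (iℓ : Fin n) (hiℓ : (iℓ : ℕ) + 1 = ℓ) (hρiℓ : ρ iℓ = j)
    (z₀ : Euc d)
    -- contaminating points
    (z : ℕ → Euc d) (hz : ∀ k : ℕ, z k = u j - gradient (convConj h) (z₀ + (k : ℝ) • v))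
    -- contaminated targets: `z k` with multiplicity `m`, together with `T(u_(i))` for `i > m`
    (y : ℕ → Fin n → Euc d)
    -- optimal assignments for the contaminated targets
    (τ : ℕ → Equiv.Perm (Fin n))
    (hτ : ∀ k : ℕ, IsOptAssign h (fun i => u (ρ i)) (y k) (τ k))
    (r : Fin n) (hr : ℓ ≤ (r : ℕ))
    (hev : ∃ K : ℕ, ∀ k : ℕ, K ≤ k → y k (τ k r) = z k) :
    Tendsto (fun k : ℕ => ‖y k (τ k iℓ)‖) atTop atTop := by
  obtain ⟨K, hK⟩ := hev
  have hiℓr : iℓ ≠ r := fun e => by rw [e] at hiℓ; omega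
  set δ := u (ρ r) - u j
  have hδv : 0 < ⟪δ, v⟫ :=
    real_inner_comm v δ ▸ not_le.mp fun hle => (not_lt.mpr hr) ((hlab r).mp hle)
  have hgrowth : ∀ k ≥ K, ⟪δ, z₀⟫ + k * ⟪δ, v⟫ ≤ h (u (ρ r) - y k (τ k iℓ)) := by
    intro k hk
    set w := gradient (convConj h) (z₀ + (k : ℝ) • v)
    have hgrad := (isConjMaximizer_gradient_convConj h1 h3 (z₀ + (k : ℝ) • v)).inner_le_sub δ
    rw [inner_add_right, real_inner_smul_right] at hgrad
    have hswap := (hτ k).cost_add_cost_le hiℓr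
    have hzj : u j - z k = w := by rw [hz k]; abel
    have hzr : u (ρ r) - z k = δ + w := by rw [hz k]; simp only [δ, w]; abel
    simp only [cost, hρiℓ, hK k hk, hzj, hzr] at hswap
    linarith [hpos (u j - y k (τ k iℓ))]
  have hcont : Continuous fun x => h (u (ρ r) - x) :=
    h1.continuous.comp (continuous_const.sub continuous_id)
  refine tendsto_norm_atTop_of_tendsto_comp hcont
    (tendsto_atTop_mono' atTop (eventually_atTop.mpr ⟨K, hgrowth⟩) ?_)
  exact tendsto_atTop_add_const_left _ _ (tendsto_natCast_atTop_atTop.atTop_mul_const hδv)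

/-- in the relabeled discrete setup with contaminating point
`z_k = u_j - ∇h*(z₀ + k v)` placed with multiplicity `m`, if for all large `k` the optimal
assignment `T_k` sends some `u_(r)` with `r ≥ ℓ+1` to `z_k`, then `‖T_k(u_j)‖ → ∞`. -/
theorem discrete_upper_part_i (d n : ℕ) (hd : 1 ≤ d) (h : Euc d → ℝ)
    (hpos : ∀ x, 0 ≤ h x) (h1 : H1 h) (h2 : H2 h) (h3 : H3 h)
    (u x : Fin n → Euc d) (hu : Function.Injective u) (hx : Function.Injective x)
    (σn : Equiv.Perm (Fin n)) (hσn : IsOptAssign h u x σn)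
    (j : Fin n) (v : Euc d) (hv : ‖v‖ = 1)
    -- relabeling `u_(i) = u (ρ i)`
    (ρ : Equiv.Perm (Fin n)) (ℓ : ℕ) (hℓ1 : 1 ≤ ℓ) (hℓn : ℓ ≤ n)
    (hlab : ∀ i : Fin n, ⟪v, u (ρ i) - u j⟫ ≤ 0 ↔ (i : ℕ) < ℓ)
    (iℓ : Fin n) (hiℓ : (iℓ : ℕ) + 1 = ℓ) (hρiℓ : ρ iℓ = j)
    (z₀ : Euc d) (m : ℕ) (hm1 : 1 ≤ m) (hmn : m ≤ n)
    -- contaminating points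
    (z : ℕ → Euc d) (hz : ∀ k : ℕ, z k = u j - gradient (convConj h) (z₀ + (k : ℝ) • v))
    -- contaminated targets: `z k` with multiplicity `m`, together with `T(u_(i))` for `i > m`
    (y : ℕ → Fin n → Euc d)
    (hy : ∀ k : ℕ, ∀ i : Fin n, y k i = if (i : ℕ) < m then z k else x (σn (ρ i)))
    -- optimal assignments for the contaminated targets
    (τ : ℕ → Equiv.Perm (Fin n))
    (hτ : ∀ k : ℕ, IsOptAssign h (fun i => u (ρ i)) (y k) (τ k))
    (r : Fin n) (hr : ℓ ≤ (r : ℕ))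
    (hev : ∃ K : ℕ, ∀ k : ℕ, K ≤ k → y k (τ k r) = z k) :
    Tendsto (fun k : ℕ => ‖y k (τ k iℓ)‖) atTop atTop :=
  discrete_upper_part_i_general d n h hpos h1 h3 u x j v ρ ℓ hlab iℓ hiℓ hρiℓ z₀ z hz y τ hτ r hr
    hev

end
end
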